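/- arXiv:1409.2813 — 5 statements merged into one kernel-verified Lean document; each statement's English description precedes it below -/
import Mathlib

section
/- For d > 1 and 0 < λ < ∞, the truncated cavity operator T admits at least one fixed point in 𝔉, i.e. there exists a non-increasing function f : [-λ, λ] → [0, 1] such that for every x ∈ [-λ, λ], f(x) = exp(-d ∫_{-x}^{λ} (x+y)^{d-1} f(y) dy). -/
open MeasureTheory Set

/-- The truncated cavity operator `T`. -/
noncomputable def T (d lam : ℝ) (f : ℝ → ℝ) : ℝ → ℝ :=
  fun x => Real.exp (-(d * ∫ y in (-x)..lam, (x + y) ^ (d - 1) * f y))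

/-- Membership in the class 𝔉 of non-increasing `[0,1]`-valued functions on `[-λ, λ]`. -/
def memF (lam : ℝ) (f : ℝ → ℝ) : Prop :=
  AntitoneOn f (Icc (-lam) lam) ∧ ∀ x ∈ Icc (-lam) lam, f x ∈ Icc (0 : ℝ) 1

/-!
Fixed points of `T` are the critical points of the free energy
`E f = d/2 ∬ k(x,y) f(x) f(y) dx dy + ∫ (f log f - f)` on `[-λ, λ]`, where `k(x,y) = (x+y)₊^(d-1)`.
By Helly's selection theorem the non-increasing `[0,1]`-valued functions are sequentially compact
for almost everywhere convergence, along which `E` is continuous, so `E` has a minimiser `f` in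
this class. The competitor `h = exp (-d K f)`, with `K f x = ∫ k(x,y) f(y) dy`, lies in the class
again; by convexity of `a ↦ a log a - a`, minimality of `f` along the segment towards `h` gives
`0 ≤ ∫ (d (h - f) K f + (h log h - h) - (f log f - f))`. By the Fenchel–Young inequality
`a s ≤ a log a - a + exp s` this integrand is pointwise `≤ 0`, with equality only where `f = h`.
Hence `f = h` almost everywhere, so `K f = K h` and `h = T h`.
-/

namespace TruncatedCavity

open Real Filter Topology

def UnitAntitone (f : ℝ → ℝ) : Prop :=
  Antitone f ∧ ∀ x, f x ∈ Icc (0 : ℝ) 1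

lemma UnitAntitone.measurable {f : ℝ → ℝ} (hf : UnitAntitone f) : Measurable f :=
  hf.1.measurable

lemma UnitAntitone.abs_le_one {f : ℝ → ℝ} (hf : UnitAntitone f) (x : ℝ) : |f x| ≤ 1 :=
  abs_le.2 ⟨by linarith [(hf.2 x).1], (hf.2 x).2⟩

lemma UnitAntitone.abs_sub_le_one {f h : ℝ → ℝ} (hf : UnitAntitone f) (hh : UnitAntitone h)
    (x : ℝ) : |h x - f x| ≤ 1 :=
  abs_sub_le_iff.2 ⟨by linarith [(hh.2 x).2, (hf.2 x).1], by linarith [(hf.2 x).2, (hh.2 x).1]⟩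

lemma unitAntitone_const_zero : UnitAntitone fun _ => 0 :=
  ⟨antitone_const, fun _ => ⟨le_rfl, zero_le_one⟩⟩

lemma UnitAntitone.add_mul_sub {f h : ℝ → ℝ} (hf : UnitAntitone f) (hh : UnitAntitone h)
    {t : ℝ} (ht : t ∈ Icc (0 : ℝ) 1) : UnitAntitone fun x => f x + t * (h x - f x) := by
  have hcomb : ∀ x, f x + t * (h x - f x) = (1 - t) * f x + t * h x := fun x => by ring
  simp only [hcomb]
  refine ⟨fun x y hxy => ?_, fun x => ⟨?_, ?_⟩⟩
  · have := hf.1 hxy; have := hh.1 hxy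
    nlinarith [ht.1, ht.2]
  · nlinarith [(hf.2 x).1, (hh.2 x).1, ht.1, ht.2]
  · nlinarith [(hf.2 x).2, (hh.2 x).2, ht.1, ht.2]

lemma exists_subseq_tendsto_rat (F : ℕ → ℝ → ℝ) (hF : ∀ n x, F n x ∈ Icc (0 : ℝ) 1) :
    ∃ (L : ℚ → ℝ) (σ : ℕ → ℕ), StrictMono σ ∧ (∀ q, L q ∈ Icc (0 : ℝ) 1) ∧
      ∀ q : ℚ, Tendsto (fun n => F (σ n) q) atTop (𝓝 (L q)) := by
  obtain ⟨L, σ, hσ, hL⟩ :=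
    CompactSpace.tendsto_subseq fun n (q : ℚ) => (⟨F n q, hF n q⟩ : Icc (0 : ℝ) 1)
  exact ⟨fun q => L q, σ, hσ, fun q => (L q).2,
    fun q => (continuous_subtype_val.tendsto _).comp (tendsto_pi_nhds.1 hL q)⟩

lemma tendsto_of_tendsto_rat_of_continuousAt {F : ℕ → ℝ → ℝ} {L : ℚ → ℝ} {g : ℝ → ℝ} {x : ℝ}
    (hF : ∀ n, Antitone (F n)) (hFL : ∀ q : ℚ, Tendsto (fun n => F n q) atTop (𝓝 (L q)))
    (hLg : ∀ q : ℚ, L q ≤ g q) (hgL : ∀ (q : ℚ) (y : ℝ), (q : ℝ) < y → g y ≤ L q)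
    (hg : ContinuousAt g x) : Tendsto (fun n => F n x) atTop (𝓝 (g x)) := by
  refine tendsto_order.2 ⟨fun a ha => ?_, fun b hb => ?_⟩
  · obtain ⟨l, u, ⟨hlx, hxu⟩, hsub⟩ :=
      mem_nhds_iff_exists_Ioo_subset.1 (hg.preimage_mem_nhds (Ioi_mem_nhds ha))
    obtain ⟨r, hxr, hru⟩ := exists_rat_btwn hxu
    have hLr : a < L r :=
      (hsub ⟨by linarith, by linarith⟩ : a < g ((r + u) / 2)).trans_le (hgL r _ (by linarith))
    filter_upwards [(tendsto_order.1 (hFL r)).1 a hLr] with n hn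
    exact hn.trans_le (hF n hxr.le)
  · obtain ⟨l, u, ⟨hlx, hxu⟩, hsub⟩ :=
      mem_nhds_iff_exists_Ioo_subset.1 (hg.preimage_mem_nhds (Iio_mem_nhds hb))
    obtain ⟨q, hlq, hqx⟩ := exists_rat_btwn hlx
    have hLq : L q < b := (hLg q).trans_lt (hsub ⟨hlq, by linarith⟩)
    filter_upwards [(tendsto_order.1 (hFL q)).2 b hLq] with n hn
    exact (hF n hqx.le).trans_lt hn

theorem exists_subseq_tendsto_ae {F : ℕ → ℝ → ℝ} (hF : ∀ n, UnitAntitone (F n)) :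
    ∃ g, UnitAntitone g ∧ ∃ σ : ℕ → ℕ, StrictMono σ ∧
      ∀ᵐ x, Tendsto (fun n => F (σ n) x) atTop (𝓝 (g x)) := by
  obtain ⟨L, σ, hσ, hL01, hFL⟩ := exists_subseq_tendsto_rat F fun n => (hF n).2
  have hL : Antitone L := fun q r hqr =>
    le_of_tendsto_of_tendsto' (hFL r) (hFL q) fun n => (hF (σ n)).1 (by exact_mod_cast hqr)
  set g : ℝ → ℝ := fun x => sInf (L '' {q : ℚ | (q : ℝ) < x})
  have hne (x : ℝ) : (L '' {q : ℚ | (q : ℝ) < x}).Nonempty :=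
    let ⟨q, hq⟩ := exists_rat_lt x; ⟨L q, q, hq, rfl⟩
  have hbdd (x : ℝ) : BddBelow (L '' {q : ℚ | (q : ℝ) < x}) :=
    ⟨0, by rintro _ ⟨q, -, rfl⟩; exact (hL01 q).1⟩
  have hgL (q : ℚ) (y : ℝ) (hqy : (q : ℝ) < y) : g y ≤ L q := csInf_le (hbdd y) ⟨q, hqy, rfl⟩
  have hLg (q : ℚ) : L q ≤ g q :=
    le_csInf (hne q) <| by
      rintro _ ⟨r, hrq, rfl⟩
      exact hL (by exact_mod_cast (show (r : ℝ) < q from hrq).le)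
  have hg : UnitAntitone g := by
    refine ⟨fun x y hxy => csInf_le_csInf (hbdd y) (hne x) (image_mono fun q hq => ?_),
      fun x => ⟨le_csInf (hne x) ?_, ?_⟩⟩
    · exact lt_of_lt_of_le hq hxy
    · rintro _ ⟨q, -, rfl⟩; exact (hL01 q).1
    · obtain ⟨q, hq⟩ := exists_rat_lt x
      exact (hgL q x hq).trans (hL01 q).2
  refine ⟨g, hg, σ, hσ, ?_⟩
  filter_upwards [hg.1.countable_not_continuousAt.ae_notMem volume] with x hx
  exact tendsto_of_tendsto_rat_of_continuousAt (fun n => (hF (σ n)).1) hFL hLg hgL (not_not.1 hx)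

theorem exists_isMinOn {E : (ℝ → ℝ) → ℝ} (hE : BddBelow (E '' {f | UnitAntitone f}))
    (hcont : ∀ {F : ℕ → ℝ → ℝ} {g : ℝ → ℝ}, (∀ n, UnitAntitone (F n)) → UnitAntitone g →
      (∀ᵐ x, Tendsto (fun n => F n x) atTop (𝓝 (g x))) →
        Tendsto (fun n => E (F n)) atTop (𝓝 (E g))) :
    ∃ f, UnitAntitone f ∧ IsMinOn E {f | UnitAntitone f} f := by
  obtain ⟨u, -, hu, hmem⟩ := exists_seq_tendsto_sInf
    (⟨_, _, unitAntitone_const_zero, rfl⟩ : (E '' {f | UnitAntitone f}).Nonempty) hE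
  choose F hF hFu using hmem
  obtain ⟨g, hg, σ, hσ, hFg⟩ := exists_subseq_tendsto_ae hF
  have hEg : E g = sInf (E '' {f | UnitAntitone f}) := tendsto_nhds_unique
    (hcont (fun n => hF (σ n)) hg hFg)
    (by simpa only [hFu, Function.comp_def] using hu.comp hσ.tendsto_atTop)
  exact ⟨g, hg, fun f hf => hEg ▸ csInf_le hE ⟨f, hf, rfl⟩⟩

noncomputable def entropy (a : ℝ) : ℝ := a * log a - a

lemma continuous_entropy : Continuous entropy :=
  continuous_mul_log.sub continuous_id

lemma convexOn_entropy : ConvexOn ℝ (Ici 0) entropy :=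
  convexOn_mul_log.sub (concaveOn_id (convex_Ici 0))

lemma abs_entropy_le_one {a : ℝ} (ha : a ∈ Icc (0 : ℝ) 1) : |entropy a| ≤ 1 := by
  have hle : a * log a ≤ 0 := mul_log_nonpos ha.1 ha.2
  have hge : a - 1 ≤ a * log a := by
    rcases ha.1.eq_or_lt with rfl | hpos
    · simp
    · have := mul_le_mul_of_nonneg_left (one_sub_inv_le_log_of_pos hpos) hpos.le
      rwa [mul_sub, mul_one, mul_inv_cancel₀ hpos.ne'] at this
  rw [entropy, abs_le]
  constructor <;> linarith [ha.1, ha.2]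

-- Fenchel–Young: `exp` is the Legendre transform of `entropy`.
lemma mul_lt_entropy_add_exp {a s : ℝ} (ha : 0 ≤ a) (has : a ≠ exp s) :
    a * s < entropy a + exp s := by
  rcases ha.eq_or_lt with rfl | hpos
  · simpa [entropy] using exp_pos s
  have hr : s - log a ≠ 0 := fun h => has (by rw [sub_eq_zero.1 h, exp_log hpos])
  have := mul_lt_mul_of_pos_left (add_one_lt_exp hr) hpos
  rw [exp_sub, exp_log hpos, mul_div_cancel₀ _ hpos.ne'] at this
  rw [entropy]
  linarith

lemma mul_le_entropy_add_exp {a : ℝ} (ha : 0 ≤ a) (s : ℝ) : a * s ≤ entropy a + exp s := by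
  by_cases has : a = exp s
  · simp [has, entropy]
  · exact (mul_lt_entropy_add_exp ha has).le

noncomputable def cavityKernel (d x y : ℝ) : ℝ :=
  if 0 < x + y then (x + y) ^ (d - 1) else 0

section Kernel

variable {d : ℝ}

lemma cavityKernel_nonneg (x y : ℝ) : 0 ≤ cavityKernel d x y := by
  unfold cavityKernel
  split_ifs with h
  exacts [rpow_nonneg h.le _, le_rfl]

lemma cavityKernel_comm (x y : ℝ) : cavityKernel d x y = cavityKernel d y x := by
  simp only [cavityKernel, add_comm x y]

lemma monotone_cavityKernel_left (hd : 1 ≤ d) (y : ℝ) :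
    Monotone fun x => cavityKernel d x y := by
  intro x₁ x₂ hx
  simp only [cavityKernel]
  split_ifs with h₁
  · exact rpow_le_rpow h₁.le (by linarith) (by linarith)
  · linarith
  · exact rpow_nonneg (le_of_lt ‹_›) _
  · exact le_rfl

lemma monotone_cavityKernel_right (hd : 1 ≤ d) (x : ℝ) : Monotone (cavityKernel d x) :=
  fun _ _ h => by simpa only [cavityKernel_comm x] using monotone_cavityKernel_left hd x h

lemma cavityKernel_le (hd : 1 ≤ d) {x y lam : ℝ} (hx : x ≤ lam) (hy : y ≤ lam) :
    cavityKernel d x y ≤ cavityKernel d lam lam :=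
  (monotone_cavityKernel_left hd y hx).trans (monotone_cavityKernel_right hd lam hy)

lemma norm_cavityKernel_mul_le {a : ℝ} (ha : |a| ≤ 1) (x y : ℝ) :
    ‖cavityKernel d x y * a‖ ≤ cavityKernel d x y := by
  rw [norm_mul, Real.norm_of_nonneg (cavityKernel_nonneg x y), Real.norm_eq_abs]
  exact mul_le_of_le_one_right (cavityKernel_nonneg x y) ha

lemma measurable_cavityKernel (hd : 1 ≤ d) :
    Measurable fun p : ℝ × ℝ => cavityKernel d p.1 p.2 :=
  Measurable.ite (measurableSet_lt measurable_const (measurable_fst.add measurable_snd))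
    ((continuous_rpow_const (by linarith)).measurable.comp (measurable_fst.add measurable_snd))
    measurable_const

end Kernel

noncomputable def kernelOp (d lam : ℝ) (f : ℝ → ℝ) (x : ℝ) : ℝ :=
  ∫ y in Icc (-lam) lam, cavityKernel d x y * f y

section KernelOp

variable {d lam : ℝ} {u v : ℝ → ℝ}

lemma integrableOn_cavityKernel_mul (hd : 1 ≤ d) (hu : Measurable u) (hu1 : ∀ y, |u y| ≤ 1)
    (x : ℝ) : IntegrableOn (fun y => cavityKernel d x y * u y) (Icc (-lam) lam) := by
  refine Measure.integrableOn_of_bounded measure_Icc_lt_top.ne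
    (((measurable_cavityKernel hd).comp measurable_prodMk_left).mul hu).aestronglyMeasurable
    (M := cavityKernel d x lam) ?_
  filter_upwards [ae_restrict_mem measurableSet_Icc] with y hy
  exact (norm_cavityKernel_mul_le (hu1 y) x y).trans (monotone_cavityKernel_right hd x hy.2)

lemma abs_kernelOp_le (hd : 1 ≤ d) (hu1 : ∀ y, |u y| ≤ 1) {x : ℝ} (hx : x ≤ lam) :
    |kernelOp d lam u x| ≤ cavityKernel d lam lam * volume.real (Icc (-lam) lam) := by
  rw [← Real.norm_eq_abs]
  exact norm_setIntegral_le_of_norm_le_const measure_Icc_lt_top fun y hy =>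
    (norm_cavityKernel_mul_le (hu1 y) x y).trans (cavityKernel_le hd hx hy.2)

lemma measurable_kernelOp (hd : 1 ≤ d) (hu : Measurable u) : Measurable (kernelOp d lam u) :=
  (StronglyMeasurable.integral_prod_right (f := fun x y => cavityKernel d x y * u y)
    ((measurable_cavityKernel hd).mul (hu.comp measurable_snd)).stronglyMeasurable).measurable

lemma kernelOp_nonneg (hu : ∀ y, 0 ≤ u y) (x : ℝ) : 0 ≤ kernelOp d lam u x :=
  setIntegral_nonneg measurableSet_Icc fun y _ => mul_nonneg (cavityKernel_nonneg x y) (hu y)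

lemma monotone_kernelOp (hd : 1 ≤ d) (hu : Measurable u) (hu0 : ∀ y, 0 ≤ u y)
    (hu1 : ∀ y, |u y| ≤ 1) : Monotone (kernelOp d lam u) := fun x₁ x₂ hx =>
  setIntegral_mono (integrableOn_cavityKernel_mul hd hu hu1 x₁)
    (integrableOn_cavityKernel_mul hd hu hu1 x₂)
    fun y => mul_le_mul_of_nonneg_right (monotone_cavityKernel_left hd y hx) (hu0 y)

lemma kernelOp_add_mul (hd : 1 ≤ d) (hu : Measurable u) (hu1 : ∀ y, |u y| ≤ 1)
    (hv : Measurable v) (hv1 : ∀ y, |v y| ≤ 1) (t x : ℝ) :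
    kernelOp d lam (fun y => u y + t * v y) x = kernelOp d lam u x + t * kernelOp d lam v x := by
  simp only [kernelOp, mul_add, mul_left_comm _ t]
  rw [integral_add (integrableOn_cavityKernel_mul hd hu hu1 x)
    ((integrableOn_cavityKernel_mul hd hv hv1 x).const_mul t), integral_const_mul]

lemma kernelOp_congr_ae (h : u =ᵐ[volume.restrict (Icc (-lam) lam)] v) :
    kernelOp d lam u = kernelOp d lam v :=
  funext fun x => integral_congr_ae (h.mono fun y hy => by simp only [hy])

lemma tendsto_kernelOp (hd : 1 ≤ d) {F : ℕ → ℝ → ℝ} {g : ℝ → ℝ} (hF : ∀ n, Measurable (F n))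
    (hF1 : ∀ n y, |F n y| ≤ 1) (hFg : ∀ᵐ y, Tendsto (fun n => F n y) atTop (𝓝 (g y)))
    (x : ℝ) : Tendsto (fun n => kernelOp d lam (F n) x) atTop (𝓝 (kernelOp d lam g x)) := by
  refine tendsto_integral_of_dominated_convergence (fun _ => cavityKernel d x lam)
    (fun n => (integrableOn_cavityKernel_mul hd (hF n) (hF1 n) x).aestronglyMeasurable)
    (integrableOn_const measure_Icc_lt_top.ne) (fun n => ?_)
    (ae_restrict_of_ae (hFg.mono fun y hy => hy.const_mul _))
  filter_upwards [ae_restrict_mem measurableSet_Icc] with y hy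
  exact (norm_cavityKernel_mul_le (hF1 n y) x y).trans (monotone_cavityKernel_right hd x hy.2)

lemma intervalIntegral_eq_kernelOp (f : ℝ → ℝ) {x : ℝ} (hx : x ∈ Icc (-lam) lam) :
    ∫ y in (-x)..lam, (x + y) ^ (d - 1) * f y = kernelOp d lam f x := by
  rw [intervalIntegral.integral_of_le (by linarith [hx.1]), kernelOp,
    setIntegral_eq_of_subset_of_forall_sdiff_eq_zero measurableSet_Icc
      (fun y hy => ⟨by linarith [hx.2, hy.1], hy.2⟩ : Ioc (-x) lam ⊆ Icc (-lam) lam)]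
  · refine setIntegral_congr_fun measurableSet_Ioc fun y hy => ?_
    rw [cavityKernel, if_pos (by linarith [hy.1])]
  · intro y hy
    rw [cavityKernel, if_neg fun h => hy.2 ⟨by linarith, hy.1.2⟩, zero_mul]

end KernelOp

noncomputable def pairing (d lam : ℝ) (u v : ℝ → ℝ) : ℝ :=
  ∫ x in Icc (-lam) lam, u x * kernelOp d lam v x

section Pairing

variable {d lam : ℝ} {u v : ℝ → ℝ}

lemma integrableOn_mul_kernelOp (hd : 1 ≤ d) (hu : Measurable u) (hu1 : ∀ y, |u y| ≤ 1)
    (hv : Measurable v) (hv1 : ∀ y, |v y| ≤ 1) :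
    IntegrableOn (fun x => u x * kernelOp d lam v x) (Icc (-lam) lam) := by
  refine Measure.integrableOn_of_bounded measure_Icc_lt_top.ne
    (hu.mul (measurable_kernelOp hd hv)).aestronglyMeasurable
    (M := cavityKernel d lam lam * volume.real (Icc (-lam) lam)) ?_
  filter_upwards [ae_restrict_mem measurableSet_Icc] with x hx
  rw [norm_mul, Real.norm_eq_abs, Real.norm_eq_abs]
  exact (mul_le_of_le_one_left (abs_nonneg _) (hu1 x)).trans (abs_kernelOp_le hd hv1 hx.2)

lemma pairing_comm (hd : 1 ≤ d) (hu : Measurable u) (hu1 : ∀ y, |u y| ≤ 1)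
    (hv : Measurable v) (hv1 : ∀ y, |v y| ≤ 1) : pairing d lam u v = pairing d lam v u := by
  have hint : Integrable (Function.uncurry fun x y => u x * (cavityKernel d x y * v y))
      ((volume.restrict (Icc (-lam) lam)).prod (volume.restrict (Icc (-lam) lam))) := by
    refine Integrable.of_bound ((hu.comp measurable_fst).mul
      ((measurable_cavityKernel hd).mul (hv.comp measurable_snd))).aestronglyMeasurable
      (cavityKernel d lam lam) ?_
    rw [Measure.prod_restrict]
    filter_upwards [ae_restrict_mem (measurableSet_Icc.prod measurableSet_Icc)] with p hp
    rw [Function.uncurry_apply_pair, norm_mul, Real.norm_eq_abs]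
    exact (mul_le_of_le_one_left (norm_nonneg _) (hu1 p.1)).trans
      ((norm_cavityKernel_mul_le (hv1 p.2) _ _).trans (cavityKernel_le hd hp.1.2 hp.2.2))
  simp only [pairing, kernelOp, ← integral_const_mul]
  rw [integral_integral_swap hint]
  refine integral_congr_ae (ae_of_all _ fun y => integral_congr_ae (ae_of_all _ fun x => ?_))
  simp only [cavityKernel_comm x y]
  ring

lemma pairing_add_mul_self (hd : 1 ≤ d) (hu : Measurable u) (hu1 : ∀ y, |u y| ≤ 1)
    (hv : Measurable v) (hv1 : ∀ y, |v y| ≤ 1) (t : ℝ) :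
    pairing d lam (fun x => u x + t * v x) (fun x => u x + t * v x) =
      pairing d lam u u + 2 * t * pairing d lam v u + t ^ 2 * pairing d lam v v := by
  have hexpand (x : ℝ) : (u x + t * v x) * (kernelOp d lam u x + t * kernelOp d lam v x) =
      (u x * kernelOp d lam u x + t * (u x * kernelOp d lam v x)) +
        (t * (v x * kernelOp d lam u x) + t ^ 2 * (v x * kernelOp d lam v x)) := by ring
  have huu := integrableOn_mul_kernelOp (lam := lam) hd hu hu1 hu hu1
  have huv := (integrableOn_mul_kernelOp (lam := lam) hd hu hu1 hv hv1).const_mul t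
  have hvu := (integrableOn_mul_kernelOp (lam := lam) hd hv hv1 hu hu1).const_mul t
  have hvv := (integrableOn_mul_kernelOp (lam := lam) hd hv hv1 hv hv1).const_mul (t ^ 2)
  have hcomm := pairing_comm (lam := lam) hd hu hu1 hv hv1
  simp only [pairing] at hcomm
  simp only [pairing, kernelOp_add_mul hd hu hu1 hv hv1, hexpand]
  rw [integral_add (f := fun x => u x * kernelOp d lam u x + t * (u x * kernelOp d lam v x))
    (g := fun x => t * (v x * kernelOp d lam u x) + t ^ 2 * (v x * kernelOp d lam v x))
    (huu.add huv) (hvu.add hvv), integral_add huu huv, integral_add hvu hvv,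
    integral_const_mul, integral_const_mul, integral_const_mul, hcomm]
  ring

lemma pairing_nonneg (hu : ∀ y, 0 ≤ u y) (hv : ∀ y, 0 ≤ v y) : 0 ≤ pairing d lam u v :=
  setIntegral_nonneg measurableSet_Icc fun x _ => mul_nonneg (hu x) (kernelOp_nonneg hv x)

lemma tendsto_pairing (hd : 1 ≤ d) {F : ℕ → ℝ → ℝ} {g : ℝ → ℝ} (hF : ∀ n, Measurable (F n))
    (hF1 : ∀ n y, |F n y| ≤ 1) (hFg : ∀ᵐ y, Tendsto (fun n => F n y) atTop (𝓝 (g y))) :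
    Tendsto (fun n => pairing d lam (F n) (F n)) atTop (𝓝 (pairing d lam g g)) := by
  refine tendsto_integral_of_dominated_convergence
    (fun _ => cavityKernel d lam lam * volume.real (Icc (-lam) lam))
    (fun n => (integrableOn_mul_kernelOp hd (hF n) (hF1 n) (hF n) (hF1 n)).aestronglyMeasurable)
    (integrableOn_const measure_Icc_lt_top.ne) (fun n => ?_)
    (ae_restrict_of_ae (hFg.mono fun x hx => hx.mul (tendsto_kernelOp hd hF hF1 hFg x)))
  filter_upwards [ae_restrict_mem measurableSet_Icc] with x hx
  rw [norm_mul, Real.norm_eq_abs, Real.norm_eq_abs]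
  exact (mul_le_of_le_one_left (abs_nonneg _) (hF1 n x)).trans (abs_kernelOp_le hd (hF1 n) hx.2)

end Pairing

noncomputable def freeEnergy (d lam : ℝ) (f : ℝ → ℝ) : ℝ :=
  d / 2 * pairing d lam f f + ∫ x in Icc (-lam) lam, entropy (f x)

section FreeEnergy

variable {d lam : ℝ}

lemma integrableOn_entropy_comp {f : ℝ → ℝ} (hf : Measurable f) (hf01 : ∀ x, f x ∈ Icc (0 : ℝ) 1) :
    IntegrableOn (fun x => entropy (f x)) (Icc (-lam) lam) :=
  Measure.integrableOn_of_bounded measure_Icc_lt_top.ne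
    (continuous_entropy.measurable.comp hf).aestronglyMeasurable
    (ae_of_all _ fun x => abs_entropy_le_one (hf01 x))

lemma bddBelow_freeEnergy (hd : 1 ≤ d) :
    BddBelow (freeEnergy d lam '' {f | UnitAntitone f}) := by
  refine ⟨-volume.real (Icc (-lam) lam), ?_⟩
  rintro _ ⟨f, hf, rfl⟩
  have hpair : 0 ≤ d / 2 * pairing d lam f f := mul_nonneg (by linarith)
    (pairing_nonneg (fun y => (hf.2 y).1) (fun y => (hf.2 y).1))
  have hent := norm_setIntegral_le_of_norm_le_const (f := fun x => entropy (f x))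
    (measure_Icc_lt_top (μ := volume) (a := -lam) (b := lam))
    fun x _ => abs_entropy_le_one (hf.2 x)
  rw [Real.norm_eq_abs, one_mul] at hent
  unfold freeEnergy
  linarith [neg_abs_le (∫ x in Icc (-lam) lam, entropy (f x))]

lemma tendsto_freeEnergy (hd : 1 ≤ d) {F : ℕ → ℝ → ℝ} {g : ℝ → ℝ} (hF : ∀ n, UnitAntitone (F n))
    (hFg : ∀ᵐ x, Tendsto (fun n => F n x) atTop (𝓝 (g x))) :
    Tendsto (fun n => freeEnergy d lam (F n)) atTop (𝓝 (freeEnergy d lam g)) := by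
  refine ((tendsto_pairing hd (fun n => (hF n).measurable) (fun n => (hF n).abs_le_one)
    hFg).const_mul _).add (tendsto_integral_of_dominated_convergence (fun _ => 1)
    (fun n => (integrableOn_entropy_comp (hF n).measurable (hF n).2).aestronglyMeasurable)
    (integrableOn_const measure_Icc_lt_top.ne)
    (fun n => ae_of_all _ fun x => abs_entropy_le_one ((hF n).2 x))
    (ae_restrict_of_ae (hFg.mono fun x hx => (continuous_entropy.tendsto _).comp hx)))

end FreeEnergy

lemma nonneg_of_forall_nonneg_add_mul {a c : ℝ} (h : ∀ t ∈ Ioc (0 : ℝ) 1, 0 ≤ a + t * c) :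
    0 ≤ a :=
  ge_of_tendsto (((continuous_const.add (continuous_id.mul continuous_const)).tendsto' 0 a
    (by simp)).mono_left nhdsWithin_le_nhds) (mem_of_superset (Ioc_mem_nhdsGT zero_lt_one) h)

section EulerLagrange

variable {d lam : ℝ} {f h : ℝ → ℝ}

lemma freeEnergy_add_mul_sub_le (hd : 1 ≤ d) (hf : UnitAntitone f) (hh : UnitAntitone h)
    {t : ℝ} (ht : t ∈ Icc (0 : ℝ) 1) :
    freeEnergy d lam (fun x => f x + t * (h x - f x)) ≤ freeEnergy d lam f +
      t * (d * pairing d lam (fun x => h x - f x) f +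
        ((∫ x in Icc (-lam) lam, entropy (h x)) - ∫ x in Icc (-lam) lam, entropy (f x))) +
      t ^ 2 * (d / 2 * pairing d lam (fun x => h x - f x) (fun x => h x - f x)) := by
  have hpair := pairing_add_mul_self (lam := lam) (v := fun x => h x - f x) hd hf.measurable
    hf.abs_le_one (hh.measurable.sub hf.measurable) (hf.abs_sub_le_one hh) t
  have hentf := integrableOn_entropy_comp (lam := lam) hf.measurable hf.2
  have henth := integrableOn_entropy_comp (lam := lam) hh.measurable hh.2
  have hent : ∫ x in Icc (-lam) lam, entropy (f x + t * (h x - f x)) ≤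
      ∫ x in Icc (-lam) lam, (entropy (f x) + t * (entropy (h x) - entropy (f x))) := by
    refine setIntegral_mono ((integrableOn_entropy_comp (hf.add_mul_sub hh ht).measurable
      (hf.add_mul_sub hh ht).2)) (hentf.add ((henth.sub hentf).const_mul t)) fun x => ?_
    have := convexOn_entropy.2 (hf.2 x).1 (hh.2 x).1 (sub_nonneg.2 ht.2) ht.1 (sub_add_cancel 1 t)
    simp only [smul_eq_mul] at this
    convert this using 1 <;> ring_nf
  rw [integral_add (g := fun x => t * (entropy (h x) - entropy (f x))) hentf
    ((henth.sub hentf).const_mul t), integral_const_mul,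
    integral_sub (f := fun x => entropy (h x)) henth hentf] at hent
  unfold freeEnergy
  rw [hpair]
  linear_combination hent

lemma first_variation_nonneg_of_isMinOn (hd : 1 ≤ d) (hf : UnitAntitone f) (hh : UnitAntitone h)
    (hmin : IsMinOn (freeEnergy d lam) {f | UnitAntitone f} f) :
    0 ≤ d * pairing d lam (fun x => h x - f x) f +
      ((∫ x in Icc (-lam) lam, entropy (h x)) - ∫ x in Icc (-lam) lam, entropy (f x)) := by
  refine nonneg_of_forall_nonneg_add_mul
    (c := d / 2 * pairing d lam (fun x => h x - f x) (fun x => h x - f x))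
    fun t ht => nonneg_of_mul_nonneg_right ?_ ht.1
  have hle := (isMinOn_iff.1 hmin _ (hf.add_mul_sub hh (Ioc_subset_Icc_self ht))).trans
    (freeEnergy_add_mul_sub_le (lam := lam) hd hf hh (Ioc_subset_Icc_self ht))
  linear_combination hle

lemma unitAntitone_exp_neg_kernelOp (hd : 1 ≤ d) (hf : UnitAntitone f) :
    UnitAntitone fun x => exp (-(d * kernelOp d lam f x)) := by
  have hK0 := kernelOp_nonneg (d := d) (lam := lam) fun y => (hf.2 y).1
  refine ⟨fun x y hxy => exp_le_exp.2 (neg_le_neg (mul_le_mul_of_nonneg_left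
      (monotone_kernelOp hd hf.measurable (fun y => (hf.2 y).1) hf.abs_le_one hxy)
      (by linarith))),
    fun x => ⟨(exp_pos _).le, exp_le_one_iff.2 ?_⟩⟩
  linarith [mul_nonneg (by linarith : (0 : ℝ) ≤ d) (hK0 x)]

lemma ae_eq_exp_neg_kernelOp_of_isMinOn (hd : 1 ≤ d) (hf : UnitAntitone f)
    (hmin : IsMinOn (freeEnergy d lam) {f | UnitAntitone f} f) :
    f =ᵐ[volume.restrict (Icc (-lam) lam)] fun x => exp (-(d * kernelOp d lam f x)) := by
  set s : ℝ → ℝ := fun x => -(d * kernelOp d lam f x)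
  have hh : UnitAntitone fun x => exp (s x) := unitAntitone_exp_neg_kernelOp hd hf
  -- the first variation in the direction of `exp ∘ s` is the integral of a Young defect
  set G : ℝ → ℝ := fun x => f x * s x - entropy (f x) - exp (s x)
  have hGle (x : ℝ) : G x ≤ 0 := by
    linarith [mul_le_entropy_add_exp (hf.2 x).1 (s x)]
  have hpair : IntegrableOn (fun x => d * ((exp (s x) - f x) * kernelOp d lam f x))
      (Icc (-lam) lam) := (integrableOn_mul_kernelOp hd (hh.measurable.sub hf.measurable)
    (hf.abs_sub_le_one hh) hf.measurable hf.abs_le_one).const_mul d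
  have henth := integrableOn_entropy_comp (lam := lam) hh.measurable hh.2
  have hentf := integrableOn_entropy_comp (lam := lam) hf.measurable hf.2
  have hent : IntegrableOn (fun x => entropy (exp (s x)) - entropy (f x)) (Icc (-lam) lam) :=
    henth.sub hentf
  have hpoint (x : ℝ) : d * ((exp (s x) - f x) * kernelOp d lam f x) +
      (entropy (exp (s x)) - entropy (f x)) = G x := by
    simp only [G, s, entropy, log_exp]
    ring
  have hGint : IntegrableOn G (Icc (-lam) lam) :=
    (hpair.add hent).congr (ae_of_all _ hpoint)
  have hG : 0 ≤ ∫ x in Icc (-lam) lam, G x := by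
    have := first_variation_nonneg_of_isMinOn (lam := lam) hd hf hh hmin
    rwa [pairing, ← integral_const_mul, ← integral_sub henth hentf, ← integral_add hpair hent,
      integral_congr_ae (ae_of_all _ hpoint)] at this
  have hG0 := (integral_eq_zero_iff_of_nonneg (fun x => neg_nonneg.2 (hGle x)) hGint.neg).1
    (by rw [integral_neg, neg_eq_zero]; exact le_antisymm (integral_nonpos hGle) hG)
  filter_upwards [hG0] with x hx
  have hGx : G x = 0 := neg_eq_zero.1 hx
  by_contra hne
  exact (mul_lt_entropy_add_exp (hf.2 x).1 hne).ne (by simp only [G] at hGx; linarith)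

end EulerLagrange

end TruncatedCavity

open TruncatedCavity

theorem truncated_cavity_exists_fixedPoint_general (d lam : ℝ) (hd : 1 < d) :
    ∃ f : ℝ → ℝ, memF lam f ∧ ∀ x ∈ Icc (-lam) lam, T d lam f x = f x := by
  obtain ⟨f, hf, hmin⟩ := exists_isMinOn (bddBelow_freeEnergy (lam := lam) hd.le)
    fun hF _ hFg => tendsto_freeEnergy hd.le hF hFg
  have hh := unitAntitone_exp_neg_kernelOp (lam := lam) hd.le hf
  have hK := kernelOp_congr_ae (d := d) (ae_eq_exp_neg_kernelOp_of_isMinOn hd.le hf hmin)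
  refine ⟨_, ⟨hh.1.antitoneOn _, fun x _ => hh.2 x⟩, fun x hx => ?_⟩
  simp only [T, intervalIntegral_eq_kernelOp _ hx, ← hK]

/-- existence of a fixed point of the truncated cavity operator. -/
theorem truncated_cavity_exists_fixedPoint (d lam : ℝ) (hd : 1 < d) (hlam : 0 < lam) :
    ∃ f : ℝ → ℝ, memF lam f ∧ ∀ x ∈ Icc (-lam) lam, T d lam f x = f x :=
  truncated_cavity_exists_fixedPoint_general d lam hd
end

section
/- Fix d > 1 and 0 < λ < ∞, and let f_λ denote the unique fixed point of the truncated cavity operator T, extended to ℝ by f_λ(x) = 1 for x ≤ -λ and f_λ(x) = 0 for x > λ. Then f_λ(0) ≥ e^{-1}. -/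
open MeasureTheory Set

/-- `f` is the fixed point of the truncated cavity operator on `[-λ, λ]`
(non-increasing and `[0,1]`-valued there), extended to `ℝ` by `1` on `(-∞, -λ]`
and `0` on `(λ, ∞)`. -/
def ExtFixedPoint (d lam : ℝ) (f : ℝ → ℝ) : Prop :=
  AntitoneOn f (Icc (-lam) lam) ∧
  (∀ x ∈ Icc (-lam) lam, f x ∈ Icc (0 : ℝ) 1) ∧
  (∀ x ≤ -lam, f x = 1) ∧ (∀ x > lam, f x = 0) ∧
  (∀ x ∈ Icc (-lam) lam, T d lam f x = f x)

/-!
Write `a = f_λ(0)` and `I = ∫₀^λ y^(d-1) f_λ(y) dy`, so that `a = exp(-d I)`. For `0 ≤ t ≤ λ`,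
splitting the cavity integral at `0`, bounding `f_λ ≥ a` on `[-t, 0]` and `(t+y)^(d-1) ≥ y^(d-1)`
on `[0, λ]` gives `f_λ(t) ≤ exp(-a t^d - d I) = a exp(-a t^d)`. Integrating this against
`d y^(d-1)` yields `d I ≤ 1 - exp(-a λ^d) < 1`, hence `a = exp(-d I) ≥ e⁻¹`.
-/

section

variable {d lam t : ℝ} {f : ℝ → ℝ}

theorem integral_add_rpow_sub_one (hd : 0 < d) (t : ℝ) :
    ∫ y in (-t)..0, (t + y) ^ (d - 1) = t ^ d / d := by
  rw [intervalIntegral.integral_comp_add_left (fun y => y ^ (d - 1)),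
    integral_rpow (Or.inl (by linarith)), sub_add_cancel]
  simp [Real.zero_rpow hd.ne']

theorem continuous_rpow_sub_one_mul_exp (hd : 1 ≤ d) (a : ℝ) :
    Continuous fun y : ℝ => y ^ (d - 1) * (a * Real.exp (-(a * y ^ d))) := by
  have := Real.continuous_rpow_const (q := d - 1) (by linarith)
  have := Real.continuous_rpow_const (q := d) (by linarith)
  fun_prop

theorem integral_rpow_sub_one_mul_exp (hd : 1 ≤ d) (a b : ℝ) :
    ∫ y in (0 : ℝ)..b, y ^ (d - 1) * (a * Real.exp (-(a * y ^ d))) =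
      (1 - Real.exp (-(a * b ^ d))) / d := by
  have hd0 : 0 < d := by linarith
  have hderiv : ∀ y ∈ uIcc 0 b, HasDerivAt (fun y : ℝ => -Real.exp (-(a * y ^ d)) / d)
      (y ^ (d - 1) * (a * Real.exp (-(a * y ^ d)))) y := by
    intro y _
    have hpow : HasDerivAt (fun y : ℝ => -(a * y ^ d)) (-(a * (d * y ^ (d - 1)))) y :=
      ((Real.hasDerivAt_rpow_const (Or.inr hd)).const_mul a).neg
    refine ((Real.hasDerivAt_exp _).comp y hpow).neg.div_const d |>.congr_deriv ?_
    field_simp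
  rw [intervalIntegral.integral_eq_sub_of_hasDerivAt hderiv
      ((continuous_rpow_sub_one_mul_exp hd a).intervalIntegrable _ _),
    Real.zero_rpow hd0.ne']
  simp only [mul_zero, neg_zero, Real.exp_zero]
  ring

theorem Antitone.intervalIntegrable_add_rpow_mul (hf : Antitone f) (hd : 1 ≤ d) (c p q : ℝ) :
    IntervalIntegrable (fun y => (c + y) ^ (d - 1) * f y) volume p q :=
  hf.intervalIntegrable.continuousOn_mul <|
    ((Real.continuous_rpow_const (by linarith)).comp (continuous_const_add c)).continuousOn

theorem Antitone.apply_zero_mul_rpow_le_integral (hf : Antitone f) (hd : 1 ≤ d) (ht : 0 ≤ t) :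
    f 0 * t ^ d / d ≤ ∫ y in (-t)..0, (t + y) ^ (d - 1) * f y := by
  have hint : IntervalIntegrable (fun y => (t + y) ^ (d - 1) * f 0) volume (-t) 0 := by
    simpa using Antitone.intervalIntegrable_add_rpow_mul (f := fun _ => f 0) antitone_const hd t (-t) 0
  calc f 0 * t ^ d / d = ∫ y in (-t)..0, (t + y) ^ (d - 1) * f 0 := by
        rw [intervalIntegral.integral_mul_const, integral_add_rpow_sub_one (by linarith)]
        ring
    _ ≤ ∫ y in (-t)..0, (t + y) ^ (d - 1) * f y :=
        intervalIntegral.integral_mono_on (by linarith) hint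
          (hf.intervalIntegrable_add_rpow_mul hd t _ _) fun y hy =>
            mul_le_mul_of_nonneg_left (hf hy.2) (Real.rpow_nonneg (by linarith [hy.1]) _)

theorem Antitone.integral_rpow_mul_le_integral_add_rpow_mul (hf : Antitone f)
    (hf0 : ∀ y, 0 ≤ f y) (hd : 1 ≤ d) (ht : 0 ≤ t) (hlam : 0 ≤ lam) :
    ∫ y in (0 : ℝ)..lam, y ^ (d - 1) * f y ≤ ∫ y in (0 : ℝ)..lam, (t + y) ^ (d - 1) * f y := by
  refine intervalIntegral.integral_mono_on hlam ?_ (hf.intervalIntegrable_add_rpow_mul hd t _ _)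
    fun y hy => mul_le_mul_of_nonneg_right
      (Real.rpow_le_rpow hy.1 (by linarith) (by linarith)) (hf0 y)
  simpa using hf.intervalIntegrable_add_rpow_mul hd 0 0 lam

end

namespace ExtFixedPoint

variable {d lam : ℝ} {f : ℝ → ℝ}

theorem mem_Icc (hf : ExtFixedPoint d lam f) (x : ℝ) : f x ∈ Icc (0 : ℝ) 1 := by
  obtain ⟨-, hmem, hone, hzero, -⟩ := hf
  rcases le_or_gt x (-lam) with hx | hx
  · simp [hone x hx]
  rcases le_or_gt x lam with hx' | hx'
  · exact hmem x ⟨hx.le, hx'⟩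
  · simp [hzero x hx']

theorem antitone (hf : ExtFixedPoint d lam f) : Antitone f := by
  intro x y hxy
  rcases le_or_gt x (-lam) with hx | hx
  · rw [hf.2.2.1 x hx]
    exact (hf.mem_Icc y).2
  rcases le_or_gt y lam with hy | hy
  · exact hf.1 ⟨hx.le, hxy.trans hy⟩ ⟨hx.le.trans hxy, hy⟩ hxy
  · rw [hf.2.2.2.1 y hy]
    exact (hf.mem_Icc x).1

theorem apply_eq (hf : ExtFixedPoint d lam f) {x : ℝ} (hx : x ∈ Icc (-lam) lam) :
    f x = Real.exp (-(d * ∫ y in (-x)..lam, (x + y) ^ (d - 1) * f y)) :=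
  (hf.2.2.2.2 x hx).symm

theorem apply_zero (hf : ExtFixedPoint d lam f) (hlam : 0 ≤ lam) :
    f 0 = Real.exp (-(d * ∫ y in (0 : ℝ)..lam, y ^ (d - 1) * f y)) := by
  simpa using hf.apply_eq ⟨by linarith, hlam⟩

theorem apply_le_mul_exp (hf : ExtFixedPoint d lam f) (hd : 1 ≤ d) {t : ℝ}
    (ht : t ∈ Icc 0 lam) : f t ≤ f 0 * Real.exp (-(f 0 * t ^ d)) := by
  obtain ⟨ht0, htl⟩ := ht
  have hlam : 0 ≤ lam := ht0.trans htl
  have hsplit := intervalIntegral.integral_add_adjacent_intervals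
    (hf.antitone.intervalIntegrable_add_rpow_mul hd t (-t) 0)
    (hf.antitone.intervalIntegrable_add_rpow_mul hd t 0 lam)
  have hleft := hf.antitone.apply_zero_mul_rpow_le_integral hd ht0
  have hright := hf.antitone.integral_rpow_mul_le_integral_add_rpow_mul
    (fun y => (hf.mem_Icc y).1) hd ht0 hlam
  have hd0 : 0 < d := by linarith
  have hmul : f 0 * t ^ d = d * (f 0 * t ^ d / d) := by field_simp
  calc f t = Real.exp (-(d * ∫ y in (-t)..lam, (t + y) ^ (d - 1) * f y)) :=
        hf.apply_eq ⟨by linarith, htl⟩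
    _ ≤ Real.exp (-(f 0 * t ^ d + d * ∫ y in (0 : ℝ)..lam, y ^ (d - 1) * f y)) := by
        rw [Real.exp_le_exp, ← hsplit, hmul]
        nlinarith
    _ = f 0 * Real.exp (-(f 0 * t ^ d)) := by
        rw [hf.apply_zero hlam, ← Real.exp_add]
        ring_nf

theorem mul_integral_le_one (hf : ExtFixedPoint d lam f) (hd : 1 ≤ d) (hlam : 0 ≤ lam) :
    d * ∫ y in (0 : ℝ)..lam, y ^ (d - 1) * f y ≤ 1 := by
  have hd0 : 0 < d := by linarith
  have hle : ∫ y in (0 : ℝ)..lam, y ^ (d - 1) * f y ≤ (1 - Real.exp (-(f 0 * lam ^ d))) / d := by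
    rw [← integral_rpow_sub_one_mul_exp hd]
    exact intervalIntegral.integral_mono_on hlam
      (by simpa using hf.antitone.intervalIntegrable_add_rpow_mul hd 0 0 lam)
      ((continuous_rpow_sub_one_mul_exp hd _).intervalIntegrable _ _)
      fun y hy => mul_le_mul_of_nonneg_left (hf.apply_le_mul_exp hd hy) (Real.rpow_nonneg hy.1 _)
  rw [le_div_iff₀ hd0] at hle
  nlinarith [Real.exp_pos (-(f 0 * lam ^ d))]

end ExtFixedPoint

/-- `f_λ(0) ≥ e⁻¹`. -/
theorem fixedPoint_at_zero_ge (d lam : ℝ) (hd : 1 < d) (hlam : 0 < lam)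
    (flam : ℝ → ℝ) (hflam : ExtFixedPoint d lam flam) :
    Real.exp (-1) ≤ flam 0 := by
  rw [hflam.apply_zero hlam.le, Real.exp_le_exp, neg_le_neg_iff]
  exact hflam.mul_integral_le_one hd.le hlam.le
end

section
/- Fix d > 1 and 0 < λ < ∞, and let f_λ denote the unique fixed point of the truncated cavity operator T, extended to ℝ by 1 on (-∞,-λ] and 0 on (λ,∞). Then for all x ∈ [0, λ], f_λ(x) ≤ f_λ(0) · exp(-f_λ(0) x^d). -/
open MeasureTheory Set

/-- for `x ∈ [0, λ]`, `f_λ(x) ≤ f_λ(0) exp(-f_λ(0) x^d)`. -/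
theorem fixedPoint_upper_bound (d lam : ℝ) (hd : 1 < d) (hlam : 0 < lam)
    (flam : ℝ → ℝ) (hflam : ExtFixedPoint d lam flam) :
    ∀ x ∈ Icc (0 : ℝ) lam, flam x ≤ flam 0 * Real.exp (-(flam 0 * x ^ d)) := by
  obtain ⟨hA, hmem, hlow, hhigh, hfix⟩ := hflam
  have hd1 : (0:ℝ) < d - 1 := by linarith
  have hd0 : (0:ℝ) < d := by linarith
  have hnn : ∀ y, 0 ≤ flam y := by
    intro y
    rcases lt_or_ge lam y with h | h
    · rw [hhigh y h]
    rcases le_or_gt y (-lam) with h' | h'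
    · rw [hlow y h']; norm_num
    · exact (hmem y ⟨h'.le, h⟩).1
  have hle1 : ∀ y, flam y ≤ 1 := by
    intro y
    rcases lt_or_ge lam y with h | h
    · rw [hhigh y h]; norm_num
    rcases le_or_gt y (-lam) with h' | h'
    · rw [hlow y h']
    · exact (hmem y ⟨h'.le, h⟩).2
  have hanti : Antitone flam := by
    intro a b hab
    rcases lt_or_ge lam b with hb | hb
    · rw [hhigh b hb]; exact hnn a
    rcases le_or_gt a (-lam) with ha | ha
    · rw [hlow a ha]; exact hle1 b
    · exact hA ⟨ha.le, hab.trans hb⟩ ⟨ha.le.trans hab, hb⟩ hab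
  have hmeas : Measurable flam := hanti.measurable
  have hcont : ∀ c : ℝ, Continuous (fun y : ℝ => (c + y) ^ (d-1)) := by
    intro c
    exact Continuous.rpow_const (by continuity) (fun y => Or.inr hd1.le)
  have hig : ∀ (c a b : ℝ), IntervalIntegrable (fun y => (c + y) ^ (d-1) * flam y) volume a b := by
    intro c a b
    rw [intervalIntegrable_iff]
    apply Measure.integrableOn_of_bounded (M := (|c| + |a| + |b|) ^ (d-1)) measure_Ioc_lt_top.ne
      (((hcont c).measurable).mul hmeas).aestronglyMeasurable
    filter_upwards [ae_restrict_mem measurableSet_uIoc] with y hy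
    have h1 : y ≤ max a b := hy.2
    have h2 : min a b ≤ y := hy.1.le
    have hmax : max a b ≤ |a| + |b| :=
      max_le (le_add_of_le_of_nonneg (le_abs_self a) (abs_nonneg b))
        (le_add_of_nonneg_of_le (abs_nonneg a) (le_abs_self b))
    have hmin : -(|a| + |b|) ≤ min a b :=
      le_min (by linarith [neg_abs_le a, abs_nonneg b]) (by linarith [neg_abs_le b, abs_nonneg a])
    have hya : |y| ≤ |a| + |b| := abs_le.mpr ⟨hmin.trans h2, h1.trans hmax⟩
    have hcy : |c + y| ≤ |c| + |a| + |b| := by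
      calc |c + y| ≤ |c| + |y| := abs_add_le _ _
        _ ≤ |c| + (|a| + |b|) := by linarith
        _ = |c| + |a| + |b| := by ring
    calc ‖(c + y) ^ (d-1) * flam y‖ = |(c + y) ^ (d-1)| * |flam y| := by
          rw [Real.norm_eq_abs, abs_mul]
      _ ≤ (|c| + |a| + |b|) ^ (d-1) * 1 := by
          apply mul_le_mul _ (abs_le.mpr ⟨by linarith [hnn y], hle1 y⟩) (abs_nonneg _)
            (Real.rpow_nonneg (by positivity) _)
          exact (Real.abs_rpow_le_abs_rpow _ _).trans
            (Real.rpow_le_rpow (abs_nonneg _) hcy hd1.le)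
      _ = (|c| + |a| + |b|) ^ (d-1) := mul_one _
  intro x hx
  obtain ⟨hx0, hxl⟩ := hx
  -- fixed point equations
  have hxeq : flam x = Real.exp (-(d * ∫ y in (-x)..lam, (x + y) ^ (d-1) * flam y)) := by
    have := hfix x ⟨by linarith, hxl⟩
    simp only [T] at this
    exact this.symm
  have h0eq : flam 0 = Real.exp (-(d * ∫ y in (0:ℝ)..lam, (0 + y) ^ (d-1) * flam y)) := by
    have := hfix 0 ⟨by linarith, hlam.le⟩
    simp only [T, neg_zero] at this
    exact this.symm
  set J := ∫ y in (0:ℝ)..lam, (0 + y) ^ (d-1) * flam y with hJ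
  -- split the integral at 0
  have hsplit : (∫ y in (-x)..lam, (x + y) ^ (d-1) * flam y)
      = (∫ y in (-x)..(0:ℝ), (x + y) ^ (d-1) * flam y)
        + (∫ y in (0:ℝ)..lam, (x + y) ^ (d-1) * flam y) :=
    (intervalIntegral.integral_add_adjacent_intervals (hig x (-x) 0) (hig x 0 lam)).symm
  -- value of the constant-weight integral
  have hK : (∫ y in (-x)..(0:ℝ), (x + y) ^ (d-1)) = x ^ d / d := by
    have hcomp : (∫ y in (-x)..(0:ℝ), (y + x) ^ (d-1)) = ∫ u in (-x + x)..(0 + x), u ^ (d-1) :=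
      intervalIntegral.integral_comp_add_right (fun u : ℝ => u ^ (d-1)) x
    simp only [neg_add_cancel, zero_add] at hcomp
    calc (∫ y in (-x)..(0:ℝ), (x + y) ^ (d-1))
        = ∫ y in (-x)..(0:ℝ), (y + x) ^ (d-1) := by
          apply intervalIntegral.integral_congr; intro y _; dsimp only; rw [add_comm]
      _ = ∫ u in (0:ℝ)..x, u ^ (d-1) := hcomp
      _ = (x ^ (d-1+1) - (0:ℝ) ^ (d-1+1)) / (d-1+1) := integral_rpow (Or.inl (by linarith))
      _ = x ^ d / d := by
          rw [show d - 1 + 1 = d by ring, Real.zero_rpow (by linarith)]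
          ring
  -- lower bound on the left piece
  have h1 : flam 0 * (x ^ d / d) ≤ ∫ y in (-x)..(0:ℝ), (x + y) ^ (d-1) * flam y := by
    have hconst : (∫ y in (-x)..(0:ℝ), (x + y) ^ (d-1) * flam 0) = flam 0 * (x ^ d / d) := by
      rw [intervalIntegral.integral_mul_const, hK, mul_comm]
    rw [← hconst]
    apply intervalIntegral.integral_mono_on (by linarith)
      (((hcont x).mul continuous_const).intervalIntegrable _ _) (hig x (-x) 0)
    intro y hy
    have hxy : (0:ℝ) ≤ x + y := by linarith [hy.1]
    exact mul_le_mul_of_nonneg_left (hanti hy.2) (Real.rpow_nonneg hxy _)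
  -- lower bound on the right piece
  have h2 : J ≤ ∫ y in (0:ℝ)..lam, (x + y) ^ (d-1) * flam y := by
    rw [hJ]
    apply intervalIntegral.integral_mono_on hlam.le (hig 0 0 lam) (hig x 0 lam)
    intro y hy
    apply mul_le_mul_of_nonneg_right _ (hnn y)
    apply Real.rpow_le_rpow (by linarith [hy.1]) (by linarith [hy.1]) hd1.le
  -- assemble
  have hsum : flam 0 * x ^ d + d * J ≤ d * ∫ y in (-x)..lam, (x + y) ^ (d-1) * flam y := by
    rw [hsplit]
    have hadd : flam 0 * (x ^ d / d) + J
        ≤ (∫ y in (-x)..(0:ℝ), (x + y) ^ (d-1) * flam y)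
          + (∫ y in (0:ℝ)..lam, (x + y) ^ (d-1) * flam y) := add_le_add h1 h2
    have := mul_le_mul_of_nonneg_left hadd hd0.le
    calc flam 0 * x ^ d + d * J = d * (flam 0 * (x ^ d / d) + J) := by
          field_simp
      _ ≤ _ := this
  calc flam x = Real.exp (-(d * ∫ y in (-x)..lam, (x + y) ^ (d-1) * flam y)) := hxeq
    _ ≤ Real.exp (-(d * J) + -(flam 0 * x ^ d)) := by
        apply Real.exp_le_exp.mpr
        linarith
    _ = Real.exp (-(d * J)) * Real.exp (-(flam 0 * x ^ d)) := Real.exp_add _ _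
    _ = flam 0 * Real.exp (-(flam 0 * x ^ d)) := by rw [← h0eq]
end

section
/- Fix d > 1. Let λ_n be a sequence of positive reals with λ_n → ∞, and for each n let f_{λ_n} be the unique fixed point of the truncated cavity operator T_{λ_n}, extended to ℝ by 1 on (-∞,-λ_n] and 0 on (λ_n,∞). If f : ℝ → [0,1] is a non-increasing function such that f_{λ_n}(x) → f(x) pointwise for every x ∈ ℝ, then f solves the un-truncated cavity equation: f(x) = exp(-d ∫_{-x}^{∞} (x+y)^{d-1} f(y) dy) for all x ∈ ℝ. -/
open MeasureTheory Set Filter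

/-- `f : ℝ → [0,1]` is a measurable solution of the un-truncated Mézard–Parisi
cavity equation `f(x) = exp(-d ∫_{-x}^∞ (x+y)^{d-1} f(y) dy)`, the integrals
being (finite and) well-defined. -/
def SolvesCavity (d : ℝ) (f : ℝ → ℝ) : Prop :=
  Measurable f ∧ (∀ x : ℝ, f x ∈ Icc (0 : ℝ) 1) ∧
  (∀ x : ℝ, IntegrableOn (fun y => (x + y) ^ (d - 1) * f y) (Ioi (-x))) ∧
  (∀ x : ℝ, f x = Real.exp (-(d * ∫ y in Ioi (-x), (x + y) ^ (d - 1) * f y)))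

/-! Each truncated fixed point `F` satisfies `F x = exp (-d ∫_{-x}^∞ (x+y)^(d-1) F y dy)` on
`[-λ, λ]`, so a lower bound `F ≥ c` on `(-∞, q)` forces `F x ≤ exp (-c (x+q)^d)`.

The limit `f` cannot vanish identically. Let `q` be the point where an `F` with `F (-R) < 1/2`
drops below `1/2`. At `q + R` the integral in the equation exceeds `log 2 / d`; its part over
an interval of length `2R` is at most `(2R)^d F 0`, and the rest, by the bound above with
`c = 1/2`, is at most `2^d e^(-R^d/2) / d`. For `R` large this keeps `F 0` away from `0`.

So `f p > 0` for some `p`; then eventually `F ≥ f p / 2` on `(-∞, p)`, all `F` share the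
integrable tail bound `exp (-(f p / 2) (y+p)^d)`, and dominated convergence carries the
equation over to `f`. -/

open Real

section

variable {d l : ℝ} {F : ℝ → ℝ}

theorem Antitone.exists_threshold {G : ℝ → ℝ} (hG : Antitone G) {a b c : ℝ}
    (ha : c ≤ G a) (hb : G b < c) :
    ∃ q ∈ Icc a b, (∀ t < q, c ≤ G t) ∧ ∀ t > q, G t < c := by
  set S := {t | c ≤ G t}
  have hSb : ∀ t ∈ S, t ≤ b := fun t ht => by
    by_contra! hbt
    exact (hG hbt.le).not_gt (hb.trans_le ht)
  have hbdd : BddAbove S := ⟨b, hSb⟩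
  refine ⟨sSup S, ⟨le_csSup hbdd ha, csSup_le ⟨a, ha⟩ hSb⟩, fun t ht => ?_, fun t ht => ?_⟩
  · obtain ⟨s, hs, hts⟩ := exists_lt_of_lt_csSup ⟨a, ha⟩ ht
    exact hs.trans (hG hts.le)
  · by_contra! hct
    exact (le_csSup hbdd hct).not_gt ht

theorem integrableOn_Icc_kernel (hd : 1 ≤ d) (x a b : ℝ) :
    IntegrableOn (fun y => (x + y) ^ (d - 1)) (Icc a b) :=
  ((continuous_rpow_const (by linarith)).comp
    (continuous_const_add x)).continuousOn.integrableOn_Icc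

theorem integrableOn_Ioc_kernel_mul (hd : 1 ≤ d) {G : ℝ → ℝ} (hG : Measurable G)
    (hG01 : ∀ y, G y ∈ Icc (0 : ℝ) 1) (x a b : ℝ) :
    IntegrableOn (fun y => (x + y) ^ (d - 1) * G y) (Ioc a b) := by
  refine ((integrableOn_Icc_kernel hd x a b).mono_set Ioc_subset_Icc_self).mul_bdd
    hG.aestronglyMeasurable (c := 1) (ae_of_all _ fun y => ?_)
  rw [norm_eq_abs, abs_le]
  exact ⟨by linarith [(hG01 y).1], (hG01 y).2⟩

theorem integral_Ioo_kernel (hd : 0 < d) {x q : ℝ} (hxq : -x ≤ q) :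
    ∫ y in Ioo (-x) q, (x + y) ^ (d - 1) = (x + q) ^ d / d := by
  rw [← integral_Ioc_eq_integral_Ioo, ← intervalIntegral.integral_of_le hxq,
    intervalIntegral.integral_comp_add_left (fun u => u ^ (d - 1)) x, add_neg_cancel,
    integral_rpow (Or.inl (by linarith)), sub_add_cancel, zero_rpow hd.ne', sub_zero]

theorem tendsto_exp_neg_mul_rpow_add (hd : 0 < d) {c : ℝ} (hc : 0 < c) (r : ℝ) :
    Tendsto (fun u => exp (-(c * (u + r) ^ d))) atTop (nhds 0) :=
  tendsto_exp_atBot.comp <| tendsto_neg_atTop_atBot.comp <|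
    ((tendsto_rpow_atTop hd).comp (tendsto_atTop_add_const_right _ r tendsto_id)).const_mul_atTop hc

theorem hasDerivAt_exp_neg_mul_rpow_add (hd : 1 ≤ d) {c : ℝ} (hc : c ≠ 0) (r s : ℝ) :
    HasDerivAt (fun u => -(c * d)⁻¹ * exp (-(c * (u + r) ^ d)))
      ((s + r) ^ (d - 1) * exp (-(c * (s + r) ^ d))) s := by
  refine ((((hasDerivAt_id s).add_const r).rpow_const (Or.inr hd)).const_mul c).neg.exp.const_mul
    (-(c * d)⁻¹) |>.congr_deriv ?_
  have : d ≠ 0 := by linarith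
  simp only [Pi.neg_apply, id]
  field_simp

theorem integrableOn_Ioi_rpow_mul_exp_neg_mul_rpow (hd : 1 ≤ d) {c a r : ℝ} (hc : 0 < c)
    (ha : 0 ≤ a + r) :
    IntegrableOn (fun s => (s + r) ^ (d - 1) * exp (-(c * (s + r) ^ d))) (Ioi a) :=
  integrableOn_Ioi_deriv_of_nonneg' (fun s _ => hasDerivAt_exp_neg_mul_rpow_add hd hc.ne' r s)
    (fun s hs => mul_nonneg (rpow_nonneg (by linarith [hs.out]) _) (exp_pos _).le)
    (by simpa using (tendsto_exp_neg_mul_rpow_add (by linarith) hc r).const_mul (-(c * d)⁻¹))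

theorem integral_Ioi_rpow_mul_exp_neg_mul_rpow (hd : 1 ≤ d) {c a r : ℝ} (hc : 0 < c)
    (ha : 0 ≤ a + r) :
    ∫ s in Ioi a, (s + r) ^ (d - 1) * exp (-(c * (s + r) ^ d)) =
      (c * d)⁻¹ * exp (-(c * (a + r) ^ d)) := by
  rw [integral_Ioi_of_hasDerivAt_of_nonneg'
    (fun s _ => hasDerivAt_exp_neg_mul_rpow_add hd hc.ne' r s)
    (fun s hs => mul_nonneg (rpow_nonneg (by linarith [hs.out]) _) (exp_pos _).le)
    (by simpa using (tendsto_exp_neg_mul_rpow_add (by linarith) hc r).const_mul (-(c * d)⁻¹))]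
  ring

theorem kernel_mul_le_of_le_exp (hd : 1 ≤ d) {x y r c g : ℝ} (hg0 : 0 ≤ g)
    (hg : g ≤ exp (-(c * (y + r) ^ d))) (hxy : 0 ≤ x + y) (hxyr : x + y ≤ 2 * (y + r)) :
    (x + y) ^ (d - 1) * g ≤ 2 ^ (d - 1) * ((y + r) ^ (d - 1) * exp (-(c * (y + r) ^ d))) := by
  calc (x + y) ^ (d - 1) * g ≤ (2 * (y + r)) ^ (d - 1) * exp (-(c * (y + r) ^ d)) :=
        mul_le_mul (rpow_le_rpow hxy hxyr (by linarith)) hg hg0 (rpow_nonneg (by linarith) _)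
    _ = _ := by rw [mul_rpow zero_le_two (by linarith)]; ring

namespace ExtFixedPoint

theorem mem_Icc_s13 (hF : ExtFixedPoint d l F) (x : ℝ) : F x ∈ Icc (0 : ℝ) 1 := by
  rcases le_or_gt x (-l) with hxl | hxl
  · simp [hF.2.2.1 x hxl]
  rcases le_or_gt x l with hxr | hxr
  · exact hF.2.1 x ⟨hxl.le, hxr⟩
  · simp [hF.2.2.2.1 x hxr]

theorem antitone_s13 (hF : ExtFixedPoint d l F) : Antitone F := by
  intro a b hab
  rcases le_or_gt a (-l) with ha | ha
  · rw [hF.2.2.1 a ha]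
    exact (hF.mem_Icc_s13 b).2
  rcases lt_or_ge l b with hb | hb
  · rw [hF.2.2.2.1 b hb]
    exact (hF.mem_Icc_s13 a).1
  exact hF.1 ⟨ha.le, hab.trans hb⟩ ⟨ha.le.trans hab, hb⟩ hab

theorem eq_exp_integral_Ioi (hF : ExtFixedPoint d l F) {x : ℝ} (hx : x ∈ Icc (-l) l) :
    F x = exp (-(d * ∫ y in Ioi (-x), (x + y) ^ (d - 1) * F y)) := by
  rw [← hF.2.2.2.2 x hx, T, intervalIntegral.integral_of_le (by linarith [hx.1]),
    setIntegral_eq_of_subset_of_forall_sdiff_eq_zero measurableSet_Ioi Ioc_subset_Ioi_self]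
  rintro y ⟨hy, hyl⟩
  rw [hF.2.2.2.1 y (lt_of_not_ge fun h => hyl ⟨hy, h⟩), mul_zero]

theorem integrableOn_Ioi_kernel_mul (hF : ExtFixedPoint d l F) (hd : 1 ≤ d)
    (x a : ℝ) : IntegrableOn (fun y => (x + y) ^ (d - 1) * F y) (Ioi a) := by
  refine ((integrableOn_Ioc_kernel_mul hd hF.antitone_s13.measurable hF.mem_Icc_s13 x a l).union
    (integrableOn_zero.congr_fun (fun y hy => ?_) measurableSet_Ioi)).mono_set
    Ioi_subset_Ioc_union_Ioi
  rw [hF.2.2.2.1 y hy, mul_zero]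

theorem le_exp_of_forall_lt_le (hF : ExtFixedPoint d l F) (hd : 1 ≤ d) {q c : ℝ}
    (hc : 0 < c) (hcF : ∀ t < q, c ≤ F t) {x : ℝ} (hxq : -x ≤ q) :
    F x ≤ exp (-(c * (x + q) ^ d)) := by
  rcases lt_or_ge l x with hxl | hxl
  · rw [hF.2.2.2.1 x hxl]
    exact (exp_pos _).le
  have hql : q ≤ l := by
    by_contra! hlq
    have h := hcF ((l + q) / 2) (by linarith)
    rw [hF.2.2.2.1 _ (by linarith)] at h
    linarith
  have hIoo : IntegrableOn (fun y => (x + y) ^ (d - 1) * F y) (Ioo (-x) q) :=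
    (hF.integrableOn_Ioi_kernel_mul hd x (-x)).mono_set Ioo_subset_Ioi_self
  have hconst : IntegrableOn (fun y => (x + y) ^ (d - 1) * c) (Ioo (-x) q) :=
    ((integrableOn_Icc_kernel hd x (-x) q).mono_set Ioo_subset_Icc_self).mul_const c
  have hI : c * (x + q) ^ d ≤ d * ∫ y in Ioi (-x), (x + y) ^ (d - 1) * F y := by
    calc c * (x + q) ^ d = d * ∫ y in Ioo (-x) q, (x + y) ^ (d - 1) * c := by
          rw [integral_mul_const, integral_Ioo_kernel (by linarith) hxq]
          field_simp
      _ ≤ d * ∫ y in Ioo (-x) q, (x + y) ^ (d - 1) * F y := by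
          refine mul_le_mul_of_nonneg_left ?_ (by linarith)
          refine setIntegral_mono_on hconst hIoo measurableSet_Ioo fun y hy => ?_
          exact mul_le_mul_of_nonneg_left (hcF y hy.2) (rpow_nonneg (by linarith [hy.1]) _)
      _ ≤ d * ∫ y in Ioi (-x), (x + y) ^ (d - 1) * F y := by
          refine mul_le_mul_of_nonneg_left ?_ (by linarith)
          refine setIntegral_mono_set (hF.integrableOn_Ioi_kernel_mul hd x (-x)) ?_
            Ioo_subset_Ioi_self.eventuallyLE
          refine (ae_restrict_iff' measurableSet_Ioi).mpr (ae_of_all _ fun y hy => ?_)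
          exact mul_nonneg (rpow_nonneg (by linarith [hy.out]) _) (hF.mem_Icc_s13 y).1
  rw [hF.eq_exp_integral_Ioi ⟨by linarith, hxl⟩]
  exact exp_le_exp.mpr (by linarith)

theorem setIntegral_Ioc_kernel_mul_le (hF : ExtFixedPoint d l F) (hd : 1 ≤ d)
    {x a b : ℝ} (hxa : -x ≤ a) (hab : a ≤ b) :
    ∫ y in Ioc a b, (x + y) ^ (d - 1) * F y ≤ (b - a) * ((x + b) ^ (d - 1) * F a) := by
  calc _ ≤ ∫ y in Ioc a b, (x + b) ^ (d - 1) * F a :=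
        setIntegral_mono_on ((hF.integrableOn_Ioi_kernel_mul hd x a).mono_set Ioc_subset_Ioi_self)
          (integrableOn_const measure_Ioc_lt_top.ne) measurableSet_Ioc fun y hy =>
            mul_le_mul (rpow_le_rpow (by linarith [hy.1]) (by linarith [hy.2]) (by linarith))
              (hF.antitone_s13 hy.1.le) (hF.mem_Icc_s13 y).1 (rpow_nonneg (by linarith) _)
    _ = _ := by rw [setIntegral_const, volume_real_Ioc_of_le hab, smul_eq_mul]

theorem setIntegral_Ioi_kernel_mul_le (hF : ExtFixedPoint d l F) (hd : 1 ≤ d)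
    {q c : ℝ} (hc : 0 < c) (hcF : ∀ t < q, c ≤ F t) {x a : ℝ} (hxa : -x ≤ a)
    (hqa : x - 2 * q ≤ a) :
    ∫ y in Ioi a, (x + y) ^ (d - 1) * F y ≤
      2 ^ (d - 1) * ((c * d)⁻¹ * exp (-(c * (a + q) ^ d))) := by
  calc _ ≤ ∫ y in Ioi a, 2 ^ (d - 1) * ((y + q) ^ (d - 1) * exp (-(c * (y + q) ^ d))) :=
        setIntegral_mono_on (hF.integrableOn_Ioi_kernel_mul hd x a)
          ((integrableOn_Ioi_rpow_mul_exp_neg_mul_rpow hd hc (by linarith)).const_mul _)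
          measurableSet_Ioi fun y hy =>
            kernel_mul_le_of_le_exp hd (hF.mem_Icc_s13 y).1
              (hF.le_exp_of_forall_lt_le hd hc hcF (by linarith [hy.out]))
              (by linarith [hy.out]) (by linarith [hy.out])
    _ = _ := by
        rw [integral_const_mul, integral_Ioi_rpow_mul_exp_neg_mul_rpow hd hc (by linarith)]

theorem log_two_lt (hF : ExtFixedPoint d l F) (hd : 1 ≤ d) {R : ℝ} (hR : 0 < R)
    (hFR : F (-R) < 1 / 2) :
    log 2 < d * (2 * R) ^ d * F 0 + 2 ^ d * exp (-(1 / 2 * R ^ d)) := by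
  obtain ⟨q, ⟨hlq, hqR⟩, hleft, hright⟩ :=
    hF.antitone_s13.exists_threshold (a := -l) (by rw [hF.2.2.1 _ le_rfl]; norm_num) hFR
  have hkF := hF.integrableOn_Ioi_kernel_mul hd (q + R)
  have hlog : log 2 < d * ∫ y in Ioi (-(q + R)), (q + R + y) ^ (d - 1) * F y := by
    have h : F (q + R) < 1 / 2 := hright _ (by linarith)
    rw [hF.eq_exp_integral_Ioi ⟨by linarith, by linarith⟩, ← lt_log_iff_exp_lt (by norm_num),
      one_div, log_inv] at h
    linarith
  have hsplit : ∫ y in Ioi (-(q + R)), (q + R + y) ^ (d - 1) * F y =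
      (∫ y in Ioc (-(q + R)) (R - q), (q + R + y) ^ (d - 1) * F y) +
        ∫ y in Ioi (R - q), (q + R + y) ^ (d - 1) * F y := by
    rw [← Ioc_union_Ioi_eq_Ioi (by linarith : -(q + R) ≤ R - q),
      setIntegral_union (Ioc_disjoint_Ioi le_rfl) measurableSet_Ioi
        ((hkF _).mono_set Ioc_subset_Ioi_self) (hkF _)]
  have hnear := hF.setIntegral_Ioc_kernel_mul_le hd le_rfl (by linarith : -(q + R) ≤ R - q)
  rw [show R - q - -(q + R) = 2 * R by ring, show q + R + (R - q) = 2 * R by ring] at hnear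
  have hfar := hF.setIntegral_Ioi_kernel_mul_le hd (by norm_num) hleft (x := q + R) (a := R - q)
    (by linarith) (by linarith)
  rw [sub_add_cancel] at hfar
  have hF0 : F (-(q + R)) ≤ F 0 := hF.antitone_s13 (by linarith)
  have hd0 : 0 ≤ d := by linarith
  calc log 2 < d * ∫ y in Ioi (-(q + R)), (q + R + y) ^ (d - 1) * F y := hlog
    _ ≤ d * (2 * R * ((2 * R) ^ (d - 1) * F 0)) +
        d * (2 ^ (d - 1) * ((1 / 2 * d)⁻¹ * exp (-(1 / 2 * R ^ d)))) := by
      rw [hsplit, mul_add]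
      gcongr
      exact hnear.trans (by gcongr)
    _ = _ := by
      rw [rpow_sub_one (by positivity), rpow_sub_one two_ne_zero]
      field_simp

end ExtFixedPoint

theorem exists_pos_of_tendsto {ι : Type*} {L : Filter ι} [L.NeBot] {lam : ι → ℝ}
    {F : ι → ℝ → ℝ} {f : ℝ → ℝ} (hd : 1 ≤ d) (hF : ∀ i, ExtFixedPoint d (lam i) (F i))
    (hconv : ∀ x, Tendsto (fun i => F i x) L (nhds (f x))) : ∃ p, 0 < f p := by
  by_contra! hf
  have hlog : 0 < log 2 / 2 := by have := log_pos one_lt_two; positivity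
  obtain ⟨R, hR, hRtail⟩ : ∃ R, 0 < R ∧ 2 ^ d * exp (-(1 / 2 * R ^ d)) < log 2 / 2 := by
    have h := ((tendsto_exp_neg_mul_rpow_add (d := d) (by linarith)
      (by norm_num : (0 : ℝ) < 1 / 2) 0).const_mul (2 ^ d)).eventually
        (gt_mem_nhds (show (2 : ℝ) ^ d * 0 < log 2 / 2 by simpa using hlog))
    obtain ⟨R, hR0, hR⟩ := ((eventually_gt_atTop 0).and h).exists
    exact ⟨R, hR0, by simpa using hR⟩
  have hd0 : 0 ≤ d * (2 * R) ^ d := mul_nonneg (by linarith) (rpow_nonneg (by linarith) _)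
  obtain ⟨i, hFR, hF0⟩ := (((hconv (-R)).eventually_lt_const
    (by linarith [hf (-R)] : f (-R) < 1 / 2)).and (((hconv 0).const_mul _).eventually_lt_const
      ((mul_nonpos_of_nonneg_of_nonpos hd0 (hf 0)).trans_lt hlog))).exists
  linarith [(hF i).log_two_lt hd hR hFR]

theorem exists_integrableOn_Ioi_kernel_bound (hd : 1 ≤ d) {c : ℝ} (hc : 0 < c) (x p : ℝ) :
    ∃ b : ℝ → ℝ, IntegrableOn b (Ioi (-x)) ∧ ∀ G : ℝ → ℝ, (∀ y, G y ∈ Icc (0 : ℝ) 1) →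
      (∀ y, -p ≤ y → G y ≤ exp (-(c * (y + p) ^ d))) →
      ∀ y ∈ Ioi (-x), ‖(x + y) ^ (d - 1) * G y‖ ≤ b y := by
  set B := max (-x) (max (-p) (x - 2 * p))
  have hxB : -x ≤ B := le_max_left _ _
  have hpB : -p ≤ B := (le_max_left _ _).trans (le_max_right _ _)
  have hxpB : x - 2 * p ≤ B := (le_max_right _ _).trans (le_max_right _ _)
  refine ⟨fun y => if y ≤ B then (x + B) ^ (d - 1)
    else 2 ^ (d - 1) * ((y + p) ^ (d - 1) * exp (-(c * (y + p) ^ d))), ?_, ?_⟩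
  · rw [← Ioc_union_Ioi_eq_Ioi hxB]
    refine IntegrableOn.union ?_ ?_
    · exact (integrableOn_const measure_Ioc_lt_top.ne).congr_fun
        (fun y hy => (if_pos hy.2).symm) measurableSet_Ioc
    · exact IntegrableOn.congr_fun ((integrableOn_Ioi_rpow_mul_exp_neg_mul_rpow (a := B) (r := p)
        hd hc (by linarith)).const_mul _)
        (fun y hy => (if_neg (not_le.mpr hy)).symm) measurableSet_Ioi
  · intro G hG htail y hy
    have hxy : 0 ≤ x + y := by linarith [hy.out]
    rw [norm_of_nonneg (mul_nonneg (rpow_nonneg hxy _) (hG y).1)]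
    dsimp only
    split_ifs with hyB
    · calc (x + y) ^ (d - 1) * G y ≤ (x + y) ^ (d - 1) * 1 :=
            mul_le_mul_of_nonneg_left (hG y).2 (rpow_nonneg hxy _)
        _ ≤ (x + B) ^ (d - 1) := by
            rw [mul_one]
            exact rpow_le_rpow hxy (by linarith) (by linarith)
    · exact kernel_mul_le_of_le_exp hd (hG y).1 (htail y (by linarith)) hxy (by linarith)

theorem tendsto_setIntegral_kernel_mul {ι : Type*} {L : Filter ι} [L.IsCountablyGenerated]
    (hd : 1 ≤ d) {c p : ℝ} (hc : 0 < c) {G : ι → ℝ → ℝ} {g : ℝ → ℝ}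
    (hGm : ∀ i, Measurable (G i)) (hG01 : ∀ i y, G i y ∈ Icc (0 : ℝ) 1)
    (htail : ∀ᶠ i in L, ∀ y, -p ≤ y → G i y ≤ exp (-(c * (y + p) ^ d)))
    (hconv : ∀ y, Tendsto (fun i => G i y) L (nhds (g y))) (x : ℝ) :
    Tendsto (fun i => ∫ y in Ioi (-x), (x + y) ^ (d - 1) * G i y) L
      (nhds (∫ y in Ioi (-x), (x + y) ^ (d - 1) * g y)) := by
  obtain ⟨b, hb, hbound⟩ := exists_integrableOn_Ioi_kernel_bound hd hc x p
  refine tendsto_integral_filter_of_dominated_convergence b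
    (Eventually.of_forall fun i => (by fun_prop : Measurable _).aestronglyMeasurable)
    (htail.mono fun i hi => ?_) hb (ae_of_all _ fun y => (hconv y).const_mul _)
  exact (ae_restrict_iff' measurableSet_Ioi).mpr (ae_of_all _ (hbound _ (hG01 i) hi))

end

theorem limit_of_truncated_fixedPoints_solves_general (d : ℝ) (hd : 1 < d)
    (lam : ℕ → ℝ) (hlim : Tendsto lam atTop atTop)
    (F : ℕ → ℝ → ℝ) (hF : ∀ n, ExtFixedPoint d (lam n) (F n))
    (f : ℝ → ℝ) (hf_anti : Antitone f) (hf_mem : ∀ x, f x ∈ Icc (0 : ℝ) 1)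
    (hconv : ∀ x : ℝ, Tendsto (fun n => F n x) atTop (nhds (f x))) :
    SolvesCavity d f := by
  obtain ⟨p, hp⟩ := exists_pos_of_tendsto hd.le hF hconv
  have hFtail : ∀ᶠ n in atTop, ∀ y, -p ≤ y → F n y ≤ exp (-(f p / 2 * (y + p) ^ d)) :=
    ((hconv p).eventually_const_lt (half_lt_self hp)).mono fun n hn y hy =>
      (hF n).le_exp_of_forall_lt_le hd.le (half_pos hp)
        (fun t ht => hn.le.trans ((hF n).antitone_s13 ht.le)) (by linarith)
  have hftail : ∀ y, -p ≤ y → f y ≤ exp (-(f p / 2 * (y + p) ^ d)) := fun y hy =>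
    le_of_tendsto (hconv y) (hFtail.mono fun n hn => hn y hy)
  have hfm : Measurable f := hf_anti.measurable
  refine ⟨hfm, hf_mem, fun x => ?_, fun x => ?_⟩
  · obtain ⟨b, hb, hbound⟩ := exists_integrableOn_Ioi_kernel_bound hd.le (half_pos hp) x p
    exact hb.mono' (by fun_prop : Measurable _).aestronglyMeasurable
      ((ae_restrict_iff' measurableSet_Ioi).mpr (ae_of_all _ (hbound f hf_mem hftail)))
  · have hfixed : ∀ᶠ n in atTop,
        exp (-(d * ∫ y in Ioi (-x), (x + y) ^ (d - 1) * F n y)) = F n x :=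
      (hlim.eventually_ge_atTop |x|).mono fun n hn =>
        ((hF n).eq_exp_integral_Ioi (abs_le.mp hn)).symm
    have hint := tendsto_setIntegral_kernel_mul hd.le (half_pos hp)
      (fun n => (hF n).antitone_s13.measurable) (fun n => (hF n).mem_Icc_s13) hFtail hconv x
    exact tendsto_nhds_unique (hconv x)
      (((continuous_exp.tendsto _).comp (hint.const_mul d).neg).congr' hfixed)

/-- any pointwise limit along `λ_n → ∞` of the extended truncated
fixed points, if non-increasing and `[0,1]`-valued, solves the un-truncated
cavity equation. -/
theorem limit_of_truncated_fixedPoints_solves (d : ℝ) (hd : 1 < d)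
    (lam : ℕ → ℝ) (hpos : ∀ n, 0 < lam n) (hlim : Tendsto lam atTop atTop)
    (F : ℕ → ℝ → ℝ) (hF : ∀ n, ExtFixedPoint d (lam n) (F n))
    (f : ℝ → ℝ) (hf_anti : Antitone f) (hf_mem : ∀ x, f x ∈ Icc (0 : ℝ) 1)
    (hconv : ∀ x : ℝ, Tendsto (fun n => F n x) atTop (nhds (f x))) :
    SolvesCavity d f :=
  limit_of_truncated_fixedPoints_solves_general d hd lam hlim F hF f hf_anti hf_mem hconv
end

section
/- Fix d > 1. Any measurable solution f : ℝ → [0,1] of the un-truncated cavity equation satisfies, for all x ≥ 0, max(f(x), 1 - f(-x)) ≤ exp(-x^d / e). Moreover, f takes values in the open interval (0,1) and is continuous on ℝ. -/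
open MeasureTheory Set Filter

/-!
Write `g x = ∫_{-x}^∞ (x+y)^{d-1} f y dy`, so that `f = exp (-d g)`. The integrand grows
with `x`, so `g` is increasing and `f` antitone. On `(-x, 0]` we have `f ≥ f 0`, hence
`f x ≤ f 0 * exp (-f 0 * x^d)` for `x ≥ 0`. Feeding this bound back into `g (-x)` and
using `x^d + (y-x)^d ≤ y^d` gives `d g (-x) ≤ exp (-f 0 * x^d)`: at `x = 0` this says
`f 0 ≥ e⁻¹`, and in general it bounds `1 - f (-x) ≤ d g (-x)`.
-/

open Real
open scoped Topology ENNReal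

section RpowExpIntegral

variable {d c : ℝ}

lemma hasDerivAt_neg_inv_mul_exp_neg_mul_sub_rpow (hd : 1 ≤ d) (hc : 0 < c) (a y : ℝ) :
    HasDerivAt (fun y => -(c * d)⁻¹ * exp (-(c * (y - a) ^ d)))
      ((y - a) ^ (d - 1) * exp (-(c * (y - a) ^ d))) y := by
  have h : HasDerivAt (fun y => -(c * d)⁻¹ * exp (-(c * (y - a) ^ d)))
      (-(c * d)⁻¹ * (exp (-(c * (y - a) ^ d)) * -(c * (1 * d * (y - a) ^ (d - 1))))) y :=
    ((((hasDerivAt_id y).sub_const a).rpow_const (Or.inr hd)).const_mul c).neg.exp.const_mul _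
  convert h using 1
  field_simp

lemma tendsto_neg_inv_mul_exp_neg_mul_sub_rpow (hd : 1 ≤ d) (hc : 0 < c) (a : ℝ) :
    Tendsto (fun y => -(c * d)⁻¹ * exp (-(c * (y - a) ^ d))) atTop (𝓝 0) := by
  have h := tendsto_exp_atBot.comp <| tendsto_neg_atTop_atBot.comp <|
    Tendsto.const_mul_atTop hc <| (tendsto_rpow_atTop (y := d) (by linarith)).comp
      (tendsto_atTop_add_const_right _ (-a) tendsto_id)
  simpa [sub_eq_add_neg] using h.const_mul (-(c * d)⁻¹)

lemma integrableOn_sub_rpow_mul_exp_neg_mul_sub_rpow (hd : 1 ≤ d) (hc : 0 < c) (a : ℝ) :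
    IntegrableOn (fun y => (y - a) ^ (d - 1) * exp (-(c * (y - a) ^ d))) (Ioi a) :=
  integrableOn_Ioi_deriv_of_nonneg'
    (fun y _ => hasDerivAt_neg_inv_mul_exp_neg_mul_sub_rpow hd hc a y)
    (fun y hy => by have := sub_nonneg.2 (le_of_lt (mem_Ioi.1 hy)); positivity)
    (tendsto_neg_inv_mul_exp_neg_mul_sub_rpow hd hc a)

lemma integral_sub_rpow_mul_exp_neg_mul_sub_rpow (hd : 1 ≤ d) (hc : 0 < c) (a : ℝ) :
    ∫ y in Ioi a, (y - a) ^ (d - 1) * exp (-(c * (y - a) ^ d)) = (c * d)⁻¹ := by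
  rw [integral_Ioi_of_hasDerivAt_of_nonneg'
    (fun y _ => hasDerivAt_neg_inv_mul_exp_neg_mul_sub_rpow hd hc a y)
    (fun y hy => by have := sub_nonneg.2 (le_of_lt (mem_Ioi.1 hy)); positivity)
    (tendsto_neg_inv_mul_exp_neg_mul_sub_rpow hd hc a)]
  simp [zero_rpow (by linarith : d ≠ 0)]

end RpowExpIntegral

noncomputable def cavityIntegral (d : ℝ) (f : ℝ → ℝ) (x : ℝ) : ℝ :=
  ∫ y in Ioi (-x), (x + y) ^ (d - 1) * f y

noncomputable def cavityIntegrand (d : ℝ) (f : ℝ → ℝ) (x : ℝ) : ℝ → ℝ :=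
  (Ioi (-x)).indicator fun y => (x + y) ^ (d - 1) * f y

section CavityIntegral

variable {d : ℝ} {f : ℝ → ℝ}

lemma cavityIntegral_eq_integral (x : ℝ) :
    cavityIntegral d f x = ∫ y, cavityIntegrand d f x y :=
  (integral_indicator measurableSet_Ioi).symm

lemma cavityIntegrand_nonneg (hf : 0 ≤ f) (x : ℝ) : 0 ≤ cavityIntegrand d f x :=
  indicator_nonneg fun y hy => mul_nonneg (rpow_nonneg (by linarith [mem_Ioi.1 hy]) _) (hf y)

lemma cavityIntegrand_mono (hd : 1 ≤ d) (hf : 0 ≤ f) : Monotone (cavityIntegrand d f) := by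
  intro x₁ x₂ h y
  by_cases hy : y ∈ Ioi (-x₁)
  · have hy₂ : y ∈ Ioi (-x₂) := mem_Ioi.2 (by linarith [mem_Ioi.1 hy])
    simp only [cavityIntegrand, indicator_of_mem hy, indicator_of_mem hy₂]
    exact mul_le_mul_of_nonneg_right
      (rpow_le_rpow (by linarith [mem_Ioi.1 hy]) (by linarith) (by linarith)) (hf y)
  · simp only [cavityIntegrand, indicator_of_notMem hy]
    exact cavityIntegrand_nonneg hf x₂ y

lemma continuousAt_cavityIntegrand_apply (hd : 1 ≤ d) {x₀ y : ℝ} (hy : y ≠ -x₀) :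
    ContinuousAt (fun x => cavityIntegrand d f x y) x₀ := by
  rcases lt_or_gt_of_ne hy with h | h
  · refine (continuousAt_const (y := (0 : ℝ))).congr
      (eventuallyEq_of_mem (Iio_mem_nhds (by linarith : x₀ < -y)) fun x hx => ?_)
    have hy' : y ∉ Ioi (-x) := fun h' => by linarith [mem_Ioi.1 h', mem_Iio.1 hx]
    simp only [cavityIntegrand, indicator_of_notMem hy']
  · have hcont : Continuous fun x : ℝ => (x + y) ^ (d - 1) * f y :=
      ((continuous_id.add continuous_const).rpow_const fun _ => Or.inr (by linarith)).mul
        continuous_const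
    refine hcont.continuousAt.congr
      (eventuallyEq_of_mem (Ioi_mem_nhds (by linarith : -y < x₀)) fun x hx => ?_)
    have hy' : y ∈ Ioi (-x) := mem_Ioi.2 (by linarith [mem_Ioi.1 hx])
    simp only [cavityIntegrand, indicator_of_mem hy']

variable (hint : ∀ x, IntegrableOn (fun y => (x + y) ^ (d - 1) * f y) (Ioi (-x)))
include hint

lemma integrable_cavityIntegrand (x : ℝ) : Integrable (cavityIntegrand d f x) :=
  (integrable_indicator_iff measurableSet_Ioi).2 (hint x)

lemma cavityIntegral_mono (hd : 1 ≤ d) (hf : 0 ≤ f) : Monotone (cavityIntegral d f) :=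
  fun x₁ x₂ h => by
    simpa only [cavityIntegral_eq_integral] using integral_mono
      (integrable_cavityIntegrand hint x₁) (integrable_cavityIntegrand hint x₂)
      (cavityIntegrand_mono hd hf h)

lemma continuous_cavityIntegral (hd : 1 ≤ d) (hf : 0 ≤ f) :
    Continuous (cavityIntegral d f) := by
  rw [funext cavityIntegral_eq_integral, continuous_iff_continuousAt]
  intro x₀
  refine continuousAt_of_dominated
    (Eventually.of_forall fun x => (integrable_cavityIntegrand hint x).aestronglyMeasurable)
    ?_ (integrable_cavityIntegrand hint (x₀ + 1)) ?_
  · filter_upwards [Iio_mem_nhds (lt_add_one x₀)] with x hx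
    refine ae_of_all _ fun y => ?_
    rw [norm_of_nonneg (cavityIntegrand_nonneg hf x y)]
    exact cavityIntegrand_mono hd hf (le_of_lt hx) y
  · filter_upwards [compl_mem_ae_iff.2 (measure_singleton (μ := volume) (-x₀))] with y hy
    exact continuousAt_cavityIntegrand_apply hd hy

lemma cavityIntegral_pos (hf : ∀ y, 0 < f y) (x : ℝ) : 0 < cavityIntegral d f x := by
  have hpos : ∀ y ∈ Ioi (-x), 0 < (x + y) ^ (d - 1) * f y := fun y hy =>
    mul_pos (rpow_pos_of_pos (by linarith [mem_Ioi.1 hy]) _) (hf y)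
  refine (setIntegral_pos_iff_support_of_nonneg_ae
    ((ae_restrict_iff' measurableSet_Ioi).2 <| ae_of_all _ fun y hy => (hpos y hy).le)
    (hint x)).2 ?_
  calc (0 : ℝ≥0∞) < volume (Ioi (-x)) := by simp
    _ ≤ _ := measure_mono (subset_inter (fun y hy => (hpos y hy).ne') subset_rfl)

lemma add_cavityIntegral_zero_le (hd : 1 ≤ d) (hf : 0 ≤ f) (hanti : Antitone f) {x : ℝ}
    (hx : 0 ≤ x) : f 0 * x ^ d / d + cavityIntegral d f 0 ≤ cavityIntegral d f x := by
  have hIoi : Ioi (-x) = Ioc (-x) 0 ∪ Ioi 0 := (Ioc_union_Ioi_eq_Ioi (by linarith)).symm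
  have hnear : ∫ y in Ioc (-x) 0, (x + y) ^ (d - 1) * f 0 = f 0 * x ^ d / d := by
    rw [← intervalIntegral.integral_of_le (by linarith), intervalIntegral.integral_mul_const,
      intervalIntegral.integral_comp_add_left (fun u => u ^ (d - 1)) x,
      integral_rpow (Or.inl (by linarith))]
    simp [zero_rpow (by linarith : d ≠ 0)]
    ring
  have hfar : cavityIntegral d f 0 ≤ ∫ y in Ioi 0, (x + y) ^ (d - 1) * f y := by
    have h0 := hint 0
    simp only [cavityIntegral, neg_zero, zero_add] at h0 ⊢
    exact setIntegral_mono_on h0 ((hint x).mono_set (hIoi ▸ subset_union_right))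
      measurableSet_Ioi fun y hy => mul_le_mul_of_nonneg_right
        (rpow_le_rpow (le_of_lt hy) (by linarith) (by linarith)) (hf y)
  have hnear_le : f 0 * x ^ d / d ≤ ∫ y in Ioc (-x) 0, (x + y) ^ (d - 1) * f y := by
    rw [← hnear]
    refine setIntegral_mono_on (Continuous.integrableOn_Ioc ?_)
      ((hint x).mono_set Ioc_subset_Ioi_self) measurableSet_Ioc fun y hy =>
        mul_le_mul_of_nonneg_left (hanti hy.2) (rpow_nonneg (by linarith [hy.1]) _)
    exact ((continuous_const.add continuous_id).rpow_const fun _ => Or.inr (by linarith)).mul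
      continuous_const
  have hsplit : cavityIntegral d f x = (∫ y in Ioc (-x) 0, (x + y) ^ (d - 1) * f y) +
      ∫ y in Ioi 0, (x + y) ^ (d - 1) * f y := by
    rw [cavityIntegral, hIoi, setIntegral_union (Ioc_disjoint_Ioi le_rfl) measurableSet_Ioi
      ((hint x).mono_set (hIoi ▸ subset_union_left))
      ((hint x).mono_set (hIoi ▸ subset_union_right))]
  linarith

lemma mul_cavityIntegral_neg_le_of_le_mul_exp_neg {c : ℝ} (hd : 1 ≤ d) (hc : 0 < c)
    (hbound : ∀ y, 0 ≤ y → f y ≤ c * exp (-(c * y ^ d))) {x : ℝ} (hx : 0 ≤ x) :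
    d * cavityIntegral d f (-x) ≤ exp (-(c * x ^ d)) := by
  have htail : cavityIntegral d f (-x) ≤ ∫ y in Ioi x,
      c * exp (-(c * x ^ d)) * ((y - x) ^ (d - 1) * exp (-(c * (y - x) ^ d))) := by
    have h := hint (-x)
    simp only [cavityIntegral, neg_neg, neg_add_eq_sub] at h ⊢
    refine setIntegral_mono_on h
      ((integrableOn_sub_rpow_mul_exp_neg_mul_sub_rpow hd hc x).const_mul _) measurableSet_Ioi
      fun y hy => ?_
    have hxy : 0 ≤ y - x := sub_nonneg.2 (le_of_lt hy)
    have hsuper : x ^ d + (y - x) ^ d ≤ y ^ d := by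
      simpa using add_rpow_le_rpow_add hx hxy hd
    calc (y - x) ^ (d - 1) * f y ≤ (y - x) ^ (d - 1) * (c * exp (-(c * y ^ d))) :=
          mul_le_mul_of_nonneg_left (hbound y (hx.trans hy.le)) (rpow_nonneg hxy _)
      _ ≤ (y - x) ^ (d - 1) * (c * (exp (-(c * x ^ d)) * exp (-(c * (y - x) ^ d)))) := by
          rw [← exp_add]
          gcongr
          nlinarith
      _ = _ := by ring
  rw [integral_const_mul, integral_sub_rpow_mul_exp_neg_mul_sub_rpow hd hc] at htail
  calc d * cavityIntegral d f (-x) ≤ d * (c * exp (-(c * x ^ d)) * (c * d)⁻¹) := by gcongr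
    _ = exp (-(c * x ^ d)) := by field_simp

end CavityIntegral

namespace SolvesCavity

variable {d : ℝ} {f : ℝ → ℝ} (hf : SolvesCavity d f)
include hf

lemma eq_exp (x : ℝ) : f x = exp (-(d * cavityIntegral d f x)) := hf.2.2.2 x

lemma nonneg : 0 ≤ f := fun x => (hf.2.1 x).1

lemma pos (x : ℝ) : 0 < f x := hf.eq_exp x ▸ exp_pos _

lemma lt_one (hd : 1 ≤ d) (x : ℝ) : f x < 1 := by
  rw [hf.eq_exp, exp_lt_one_iff, neg_lt_zero]
  exact mul_pos (by linarith) (cavityIntegral_pos hf.2.2.1 hf.pos x)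

lemma continuous (hd : 1 ≤ d) : Continuous f := by
  rw [funext hf.eq_exp]
  exact ((continuous_cavityIntegral hf.2.2.1 hd hf.nonneg).const_mul d).neg.rexp

lemma antitone (hd : 1 ≤ d) : Antitone f := fun x y hxy => by
  rw [hf.eq_exp, hf.eq_exp]
  have := cavityIntegral_mono hf.2.2.1 hd hf.nonneg hxy
  gcongr

lemma le_mul_exp_neg (hd : 1 ≤ d) {x : ℝ} (hx : 0 ≤ x) :
    f x ≤ f 0 * exp (-(f 0 * x ^ d)) := by
  have h := mul_le_mul_of_nonneg_left
    (add_cavityIntegral_zero_le hf.2.2.1 hd hf.nonneg (hf.antitone hd) hx)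
    (by linarith : 0 ≤ d)
  rw [mul_add, mul_div_cancel₀ _ (by linarith : d ≠ 0)] at h
  calc f x = exp (-(d * cavityIntegral d f x)) := hf.eq_exp x
    _ ≤ exp (-(f 0 * x ^ d) + -(d * cavityIntegral d f 0)) := by
        gcongr
        linarith
    _ = f 0 * exp (-(f 0 * x ^ d)) := by rw [exp_add, ← hf.eq_exp 0, mul_comm]

lemma mul_cavityIntegral_neg_le (hd : 1 ≤ d) {x : ℝ} (hx : 0 ≤ x) :
    d * cavityIntegral d f (-x) ≤ exp (-(f 0 * x ^ d)) :=
  mul_cavityIntegral_neg_le_of_le_mul_exp_neg hf.2.2.1 hd (hf.pos 0)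
    (fun _ hy => hf.le_mul_exp_neg hd hy) hx

lemma exp_neg_one_le (hd : 1 ≤ d) : exp (-1) ≤ f 0 := by
  have h := hf.mul_cavityIntegral_neg_le hd le_rfl
  rw [neg_zero, zero_rpow (by linarith), mul_zero, neg_zero, exp_zero] at h
  rw [hf.eq_exp 0]
  gcongr

lemma exp_neg_mul_rpow_le (hd : 1 ≤ d) {x : ℝ} (hx : 0 ≤ x) :
    exp (-(f 0 * x ^ d)) ≤ exp (-(x ^ d / exp 1)) := by
  rw [div_eq_mul_inv, ← exp_neg, mul_comm]
  have := hf.exp_neg_one_le hd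
  gcongr

lemma le_exp_neg_rpow_div_exp_one (hd : 1 ≤ d) {x : ℝ} (hx : 0 ≤ x) :
    f x ≤ exp (-(x ^ d / exp 1)) :=
  calc f x ≤ f 0 * exp (-(f 0 * x ^ d)) := hf.le_mul_exp_neg hd hx
    _ ≤ exp (-(f 0 * x ^ d)) := mul_le_of_le_one_left (exp_pos _).le (hf.2.1 0).2
    _ ≤ exp (-(x ^ d / exp 1)) := hf.exp_neg_mul_rpow_le hd hx

lemma one_sub_apply_neg_le_exp_neg_rpow_div_exp_one (hd : 1 ≤ d) {x : ℝ} (hx : 0 ≤ x) :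
    1 - f (-x) ≤ exp (-(x ^ d / exp 1)) :=
  calc 1 - f (-x) ≤ d * cavityIntegral d f (-x) := by
        linarith [hf.eq_exp (-x), add_one_le_exp (-(d * cavityIntegral d f (-x)))]
    _ ≤ exp (-(f 0 * x ^ d)) := hf.mul_cavityIntegral_neg_le hd hx
    _ ≤ exp (-(x ^ d / exp 1)) := hf.exp_neg_mul_rpow_le hd hx

end SolvesCavity

/-- uniform bounds, `(0,1)`-valuedness and continuity for any
solution of the un-truncated cavity equation. -/
theorem cavity_solution_bounds (d : ℝ) (hd : 1 < d)
    (f : ℝ → ℝ) (hf : SolvesCavity d f) :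
    (∀ x : ℝ, 0 ≤ x →
      max (f x) (1 - f (-x)) ≤ Real.exp (-(x ^ d / Real.exp 1))) ∧
    (∀ x : ℝ, f x ∈ Ioo (0 : ℝ) 1) ∧ Continuous f :=
  ⟨fun _ hx => max_le (hf.le_exp_neg_rpow_div_exp_one hd.le hx)
      (hf.one_sub_apply_neg_le_exp_neg_rpow_div_exp_one hd.le hx),
    fun x => ⟨hf.pos x, hf.lt_one hd.le x⟩, hf.continuous hd.le⟩
end
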